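/- arXiv:1704.02728 — 8 statements merged into one kernel-verified Lean document; each statement's English description precedes it below -/
import Mathlib

section
/- Assume k and p are symmetric dispersal kernels, m, M ∈ C(Ω̄) are nonconstant, d, D, b, c > 0 and 0 < bc ≤ 1, and assume positive semi-trivial profiles u_d and v_D exist. If the stability index μ of (u_d,0) and the stability index ν of (0,v_D) satisfy μ ≤ 0 and ν ≤ 0, then μ = ν = 0, bc = 1, and b·u_d(x) = v_D(x) for every x ∈ Ω̄. Conversely, if bc = 1 and b·u_d = v_D on Ω̄, then μ = ν = 0. -/
open MeasureTheory Topology Filter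

noncomputable section

abbrev Pt (n : ℕ) := EuclideanSpace ℝ (Fin n)

def IsBoundedDomain {n : ℕ} (Ω : Set (Pt n)) : Prop :=
  IsOpen Ω ∧ IsConnected Ω ∧ Bornology.IsBounded Ω

def IsDispersalKernel {n : ℕ} (k : Pt n → Pt n → ℝ) : Prop :=
  Continuous (Function.uncurry k) ∧ (∀ x y, 0 ≤ k x y) ∧ (∀ x, 0 < k x x) ∧
  (∀ x, (∫ y, k x y) = 1) ∧ (∀ x, (∫ y, k y x) = 1)

def SymmKernel {n : ℕ} (k : Pt n → Pt n → ℝ) : Prop := ∀ x y, k x y = k y x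

def nlOp {n : ℕ} (Ω : Set (Pt n)) (k : Pt n → Pt n → ℝ) (φ : Pt n → ℝ) (x : Pt n) : ℝ :=
  (∫ y in Ω, k x y * φ y) - (∫ y in Ω, k y x) * φ x

def Nonconstant {n : ℕ} (Ω : Set (Pt n)) (m : Pt n → ℝ) : Prop :=
  ¬ ∃ a : ℝ, ∀ x ∈ closure Ω, m x = a

def SemiTrivialProfile {n : ℕ} (Ω : Set (Pt n)) (k : Pt n → Pt n → ℝ) (d : ℝ)
    (m u : Pt n → ℝ) : Prop :=
  ContinuousOn u (closure Ω) ∧ (∀ x ∈ closure Ω, 0 < u x) ∧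
  ∀ x ∈ closure Ω, d * nlOp Ω k u x + u x * (m x - u x) = 0

def stabIdx {n : ℕ} (Ω : Set (Pt n)) (p : Pt n → Pt n → ℝ) (D : ℝ) (q : Pt n → ℝ) : ℝ :=
  sSup {r : ℝ | ∃ ψ : Pt n → ℝ, MemLp ψ 2 (volume.restrict Ω) ∧
    ¬ ψ =ᵐ[volume.restrict Ω] (fun _ => (0:ℝ)) ∧
    r = (∫ x in Ω, (D * ψ x * nlOp Ω p ψ x + q x * ψ x ^ 2)) / (∫ x in Ω, ψ x ^ 2)}

def IsSteadyState {n : ℕ} (Ω : Set (Pt n)) (k p : Pt n → Pt n → ℝ)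
    (d D b c : ℝ) (m M u v : Pt n → ℝ) : Prop :=
  ContinuousOn u (closure Ω) ∧ ContinuousOn v (closure Ω) ∧
  (∀ x ∈ closure Ω, d * nlOp Ω k u x + u x * (m x - u x - c * v x) = 0) ∧
  (∀ x ∈ closure Ω, D * nlOp Ω p v x + v x * (M x - b * u x - v x) = 0)

def IsPositiveSteadyState {n : ℕ} (Ω : Set (Pt n)) (k p : Pt n → Pt n → ℝ)
    (d D b c : ℝ) (m M u v : Pt n → ℝ) : Prop :=
  IsSteadyState Ω k p d D b c m M u v ∧
  (∀ x ∈ closure Ω, 0 < u x) ∧ (∀ x ∈ closure Ω, 0 < v x)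

def IsBoundedClassicalSolution {n : ℕ} (Ω : Set (Pt n)) (k p : Pt n → Pt n → ℝ)
    (d D b c : ℝ) (m M : Pt n → ℝ) (u v : Pt n → ℝ → ℝ) : Prop :=
  ContinuousOn (fun q : Pt n × ℝ => u q.1 q.2) (closure Ω ×ˢ Set.Ici 0) ∧
  ContinuousOn (fun q : Pt n × ℝ => v q.1 q.2) (closure Ω ×ˢ Set.Ici 0) ∧
  (∃ C : ℝ, ∀ x ∈ closure Ω, ∀ t ≥ (0:ℝ), |u x t| ≤ C ∧ |v x t| ≤ C) ∧
  (∀ x ∈ closure Ω, ∀ t ≥ (0:ℝ), DifferentiableWithinAt ℝ (u x) (Set.Ici 0) t ∧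
      DifferentiableWithinAt ℝ (v x) (Set.Ici 0) t) ∧
  (∀ x ∈ closure Ω, ∀ t > (0:ℝ),
      HasDerivAt (u x)
        (d * nlOp Ω k (fun y => u y t) x + u x t * (m x - u x t - c * v x t)) t ∧
      HasDerivAt (v x)
        (D * nlOp Ω p (fun y => v y t) x + v x t * (M x - b * u x t - v x t)) t)


/-!
Let `v > 0` solve `D P[v] + v (M - v) = 0` with `P` symmetric. Writing
`H(x, y) = p(x, y) (ψ(x) ψ(y) - v(y) ψ(x)² / v(x))`, the steady-state equation gives
`D ψ P[ψ] + (M - v) ψ² = D ∫ H(x, y) dy`, and `H(x, y) + H(y, x)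
= -p(x, y) (v(y) ψ(x) - v(x) ψ(y))² / (v(x) v(y)) ≤ 0` (Picone). So the quadratic form of
`D P + (M - v)` is nonpositive and vanishes at `v`: for a weight `M - v + w` the stability index
lies between `∫ w v² / ∫ v²` and `sup w`.

For `μ` the weight is `M - v_D + (v_D - b u_d)`, for `ν` it is `m - u_d + (u_d - c v_D)`, so
`μ, ν ≤ 0` give `∫ (v_D - b u_d) v_D² ≤ 0` and `∫ (u_d - c v_D) u_d² ≤ 0`. Multiplying the second
by `b³`, using `bc ≤ 1` and adding yields `∫ (v_D + b u_d) (v_D - b u_d)² ≤ 0`, whence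
`b u_d = v_D`; the second inequality then reads `(1 - bc) ∫ u_d³ ≤ 0`, i.e. `bc = 1`.
-/

lemma integral_sq_pos {α : Type*} [MeasurableSpace α] {μ : Measure α} {ψ : α → ℝ}
    (hψ : MemLp ψ 2 μ) (hψ0 : ¬ ψ =ᵐ[μ] (fun _ => (0:ℝ))) :
    0 < ∫ x, ψ x ^ 2 ∂μ := by
  rw [integral_pos_iff_support_of_nonneg_ae (ae_of_all _ fun x => sq_nonneg (ψ x))
    hψ.integrable_sq, pos_iff_ne_zero]
  intro h
  refine hψ0 (ae_iff.2 ?_)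
  simpa [Function.support] using h

section BoundedOpenSet

variable {X : Type*} [MetricSpace X] [ProperSpace X] [MeasurableSpace X] [BorelSpace X]
  {μ : Measure X} [IsFiniteMeasureOnCompacts μ] {Ω : Set X} {f : X → ℝ}

lemma integrableOn_of_continuousOn_closure (hΩb : Bornology.IsBounded Ω)
    (hf : ContinuousOn f (closure Ω)) : IntegrableOn f Ω μ :=
  (hf.integrableOn_compact hΩb.isCompact_closure).mono_set subset_closure

variable [μ.IsOpenPosMeasure]

lemma setIntegral_pos_of_continuousOn_closure (hΩo : IsOpen Ω) (hΩb : Bornology.IsBounded Ω)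
    (hne : Ω.Nonempty) (hf : ContinuousOn f (closure Ω)) (hpos : ∀ x ∈ Ω, 0 < f x) :
    0 < ∫ x in Ω, f x ∂μ := by
  rw [setIntegral_pos_iff_support_of_nonneg_ae
    (ae_restrict_of_forall_mem hΩo.measurableSet fun x hx => (hpos x hx).le)
    (integrableOn_of_continuousOn_closure hΩb hf)]
  exact (hΩo.measure_pos μ hne).trans_le (measure_mono fun x hx => ⟨(hpos x hx).ne', hx⟩)

lemma eqOn_zero_of_setIntegral_nonpos (hΩo : IsOpen Ω) (hΩb : Bornology.IsBounded Ω)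
    (hf : ContinuousOn f (closure Ω)) (hnn : ∀ x ∈ Ω, 0 ≤ f x)
    (hint : ∫ x in Ω, f x ∂μ ≤ 0) : Set.EqOn f 0 Ω := by
  have hae : 0 ≤ᵐ[μ.restrict Ω] f := ae_restrict_of_forall_mem hΩo.measurableSet hnn
  have hzero : f =ᵐ[μ.restrict Ω] 0 :=
    (setIntegral_eq_zero_iff_of_nonneg_ae hae (integrableOn_of_continuousOn_closure hΩb hf)).1
      (hint.antisymm (integral_nonneg_of_ae hae))
  exact Measure.eqOn_open_of_ae_eq hzero hΩo (hf.mono subset_closure) continuousOn_const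

theorem eqOn_const_mul_of_setIntegral_nonpos (hΩo : IsOpen Ω) (hΩb : Bornology.IsBounded Ω)
    {u v : X → ℝ} {b c : ℝ} (hu : ContinuousOn u (closure Ω))
    (hv : ContinuousOn v (closure Ω))
    (hu0 : ∀ x ∈ Ω, 0 < u x) (hv0 : ∀ x ∈ Ω, 0 < v x) (hb : 0 < b) (hbc : b * c ≤ 1)
    (hvu : ∫ x in Ω, (v x - b * u x) * v x ^ 2 ∂μ ≤ 0)
    (huv : ∫ x in Ω, (u x - c * v x) * u x ^ 2 ∂μ ≤ 0) :
    Set.EqOn (fun x => b * u x) v Ω := by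
  have hI₁ : IntegrableOn (fun x => (b * u x - v x) * (b * u x) ^ 2) Ω μ :=
    integrableOn_of_continuousOn_closure hΩb (by fun_prop)
  have hsum : ∫ x in Ω, (v x + b * u x) * (v x - b * u x) ^ 2 ∂μ ≤ 0 :=
    calc ∫ x in Ω, (v x + b * u x) * (v x - b * u x) ^ 2 ∂μ
        = (∫ x in Ω, (v x - b * u x) * v x ^ 2 ∂μ)
          + ∫ x in Ω, (b * u x - v x) * (b * u x) ^ 2 ∂μ := by
          rw [← integral_add (integrableOn_of_continuousOn_closure hΩb (by fun_prop)) hI₁]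
          exact integral_congr_ae (ae_of_all _ fun x => by ring)
      _ ≤ (∫ x in Ω, (v x - b * u x) * v x ^ 2 ∂μ)
          + ∫ x in Ω, b ^ 3 * ((u x - c * v x) * u x ^ 2) ∂μ := by
          refine add_le_add_right (setIntegral_mono_on hI₁ (integrableOn_of_continuousOn_closure
            (f := fun x => b ^ 3 * ((u x - c * v x) * u x ^ 2)) hΩb (by fun_prop))
            hΩo.measurableSet fun x hx => ?_) _
          -- the two sides differ by `b² u² v (1 - bc) ≥ 0`
          nlinarith [mul_nonneg (mul_nonneg (sq_nonneg (b * u x)) (hv0 x hx).le)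
            (sub_nonneg.2 hbc)]
      _ ≤ 0 := by
          rw [integral_const_mul]
          nlinarith [pow_pos hb 3]
  have hzero := eqOn_zero_of_setIntegral_nonpos
    (f := fun x => (v x + b * u x) * (v x - b * u x) ^ 2) hΩo hΩb (by fun_prop)
    (fun x hx => mul_nonneg (by nlinarith [hu0 x hx, hv0 x hx]) (sq_nonneg _)) hsum
  intro x hx
  have hpos : 0 < v x + b * u x := by nlinarith [hu0 x hx, hv0 x hx]
  have h : (v x + b * u x) * (v x - b * u x) ^ 2 = 0 := hzero hx
  rw [mul_eq_zero, or_iff_right hpos.ne', sq_eq_zero_iff, sub_eq_zero] at h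
  exact h.symm

lemma one_le_mul_of_setIntegral_nonpos (hΩo : IsOpen Ω) (hΩb : Bornology.IsBounded Ω)
    (hne : Ω.Nonempty) {u v : X → ℝ} {b c : ℝ} (hu : ContinuousOn u (closure Ω))
    (hu0 : ∀ x ∈ Ω, 0 < u x) (hbuv : Set.EqOn (fun x => b * u x) v Ω)
    (huv : ∫ x in Ω, (u x - c * v x) * u x ^ 2 ∂μ ≤ 0) : 1 ≤ b * c := by
  have hcube : 0 < ∫ x in Ω, u x ^ 3 ∂μ :=
    setIntegral_pos_of_continuousOn_closure hΩo hΩb hne (hu.pow 3) fun x hx =>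
      pow_pos (hu0 x hx) 3
  have : ∫ x in Ω, (u x - c * v x) * u x ^ 2 ∂μ
      = (1 - b * c) * ∫ x in Ω, u x ^ 3 ∂μ := by
    rw [← integral_const_mul]
    refine setIntegral_congr_fun hΩo.measurableSet fun x hx => ?_
    rw [← hbuv hx]
    ring
  nlinarith

end BoundedOpenSet

section Nonlocal

variable {n : ℕ} {Ω : Set (Pt n)} {p : Pt n → Pt n → ℝ} {D : ℝ} {M v ψ : Pt n → ℝ}

def quadForm (Ω : Set (Pt n)) (p : Pt n → Pt n → ℝ) (D : ℝ) (q ψ : Pt n → ℝ) (x : Pt n) :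
    ℝ :=
  D * ψ x * nlOp Ω p ψ x + q x * ψ x ^ 2

def rayleighQuotient (Ω : Set (Pt n)) (p : Pt n → Pt n → ℝ) (D : ℝ) (q ψ : Pt n → ℝ) :
    ℝ :=
  (∫ x in Ω, quadForm Ω p D q ψ x) / ∫ x in Ω, ψ x ^ 2

lemma rayleighQuotient_le_stabIdx {q : Pt n → ℝ} {C : ℝ}
    (hC : ∀ φ : Pt n → ℝ, MemLp φ 2 (volume.restrict Ω) →
      ¬ φ =ᵐ[volume.restrict Ω] (fun _ => (0:ℝ)) → rayleighQuotient Ω p D q φ ≤ C)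
    (hψ : MemLp ψ 2 (volume.restrict Ω))
    (hψ0 : ¬ ψ =ᵐ[volume.restrict Ω] (fun _ => (0:ℝ))) :
    rayleighQuotient Ω p D q ψ ≤ stabIdx Ω p D q :=
  le_csSup ⟨C, by rintro _ ⟨φ, hφ, hφ0, rfl⟩; exact hC φ hφ hφ0⟩ ⟨ψ, hψ, hψ0, rfl⟩

lemma stabIdx_le_of_forall_rayleighQuotient_le {q : Pt n → ℝ} {C : ℝ}
    (hC : ∀ φ : Pt n → ℝ, MemLp φ 2 (volume.restrict Ω) →
      ¬ φ =ᵐ[volume.restrict Ω] (fun _ => (0:ℝ)) → rayleighQuotient Ω p D q φ ≤ C)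
    (hψ : MemLp ψ 2 (volume.restrict Ω))
    (hψ0 : ¬ ψ =ᵐ[volume.restrict Ω] (fun _ => (0:ℝ))) :
    stabIdx Ω p D q ≤ C :=
  csSup_le ⟨_, ψ, hψ, hψ0, rfl⟩ (by rintro _ ⟨φ, hφ, hφ0, rfl⟩; exact hC φ hφ hφ0)

def piconeKernel (p : Pt n → Pt n → ℝ) (v ψ : Pt n → ℝ) (z : Pt n × Pt n) : ℝ :=
  p z.1 z.2 * (ψ z.1 * ψ z.2 - v z.2 / v z.1 * ψ z.1 ^ 2)

lemma piconeKernel_add_swap_nonpos (hp0 : ∀ x y, 0 ≤ p x y) (hps : SymmKernel p)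
    {z : Pt n × Pt n} (h₁ : 0 < v z.1) (h₂ : 0 < v z.2) :
    piconeKernel p v ψ z + piconeKernel p v ψ z.swap ≤ 0 := by
  have hsq : piconeKernel p v ψ z + piconeKernel p v ψ z.swap
      = -(p z.1 z.2 / (v z.1 * v z.2) * (v z.2 * ψ z.1 - v z.1 * ψ z.2) ^ 2) := by
    simp only [piconeKernel, Prod.fst_swap, Prod.snd_swap, hps z.2 z.1]
    field_simp
    ring
  rw [hsq, neg_nonpos]
  have := hp0 z.1 z.2
  positivity

lemma integrable_piconeKernel (hΩo : IsOpen Ω) (hΩb : Bornology.IsBounded Ω)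
    (hpc : Continuous (Function.uncurry p)) (hv : ContinuousOn v (closure Ω))
    (hv0 : ∀ x ∈ closure Ω, v x ≠ 0) (hψ : MemLp ψ 2 (volume.restrict Ω)) :
    Integrable (piconeKernel p v ψ) ((volume.restrict Ω).prod (volume.restrict Ω)) := by
  have : IsFiniteMeasure (volume.restrict Ω) := isFiniteMeasure_restrict.2 hΩb.measure_lt_top.ne
  have hψ₁ : Integrable ψ (volume.restrict Ω) := hψ.integrable one_le_two
  have hcpt : IsCompact (closure (Ω ×ˢ Ω)) := (hΩb.prod hΩb).isCompact_closure
  have hmeas : MeasurableSet (Ω ×ˢ Ω) := hΩo.measurableSet.prod hΩo.measurableSet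
  have hp : ContinuousOn (fun z : Pt n × Pt n => p z.1 z.2) (closure (Ω ×ˢ Ω)) :=
    hpc.continuousOn
  have hpv : ContinuousOn (fun z : Pt n × Pt n => p z.1 z.2 * v z.2 / v z.1)
      (closure (Ω ×ˢ Ω)) := by
    rw [closure_prod_eq]
    exact (hpc.continuousOn.mul (hv.comp continuousOn_snd fun z hz => hz.2)).div
      (hv.comp continuousOn_fst fun z hz => hz.1) fun z hz => hv0 z.1 hz.1
  rw [Measure.prod_restrict]
  have h₁ : IntegrableOn (fun z : Pt n × Pt n => ψ z.1 * ψ z.2) (Ω ×ˢ Ω)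
      (volume.prod volume) := by
    rw [IntegrableOn, ← Measure.prod_restrict]
    exact hψ₁.mul_prod hψ₁
  have h₂ : IntegrableOn (fun z : Pt n × Pt n => ψ z.1 ^ 2 * 1) (Ω ×ˢ Ω)
      (volume.prod volume) := by
    rw [IntegrableOn, ← Measure.prod_restrict]
    exact hψ.integrable_sq.mul_prod (integrable_const 1)
  refine ((h₁.continuousOn_mul_of_subset hp hcpt hmeas subset_closure).sub
    (h₂.continuousOn_mul_of_subset hpv hcpt hmeas subset_closure)).congr
    (ae_of_all _ fun z => ?_)
  simp only [piconeKernel, Pi.sub_apply]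
  ring

lemma quadForm_eq_integral_piconeKernel (hΩo : IsOpen Ω) (hΩb : Bornology.IsBounded Ω)
    (hpc : Continuous (Function.uncurry p)) (hv : SemiTrivialProfile Ω p D M v)
    (hψ : Integrable ψ (volume.restrict Ω)) {x : Pt n} (hx : x ∈ closure Ω) :
    quadForm Ω p D (fun y => M y - v y) ψ x = D * ∫ y in Ω, piconeKernel p v ψ (x, y) := by
  obtain ⟨hvc, hvpos, hveq⟩ := hv
  have hpx : ContinuousOn (fun y => p x y) (closure Ω) :=
    (hpc.comp (Continuous.prodMk_right x)).continuousOn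
  have hpψ : IntegrableOn (fun y => p x y * ψ y) Ω :=
    IntegrableOn.continuousOn_mul_of_subset hpx hψ hΩb.isCompact_closure hΩo.measurableSet
      subset_closure
  have hpv : IntegrableOn (fun y => p x y * v y) Ω :=
    integrableOn_of_continuousOn_closure hΩb (hpx.mul hvc)
  have hsplit : ∫ y in Ω, piconeKernel p v ψ (x, y)
      = ψ x * (∫ y in Ω, p x y * ψ y) - ψ x ^ 2 / v x * ∫ y in Ω, p x y * v y := by
    rw [← integral_const_mul, ← integral_const_mul,
      ← integral_sub (hpψ.const_mul _) (hpv.const_mul _)]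
    refine integral_congr_ae (ae_of_all _ fun y => ?_)
    simp only [piconeKernel]
    ring
  have heq := hveq x hx
  have hcancel : ψ x ^ 2 / v x * v x = ψ x ^ 2 := div_mul_cancel₀ _ (hvpos x hx).ne'
  rw [hsplit]
  simp only [quadForm, nlOp] at heq ⊢
  linear_combination (ψ x ^ 2 / v x) * heq
    + (D * (∫ y in Ω, p y x) - (M x - v x)) * hcancel

lemma quadForm_ae_eq_integral_piconeKernel (hΩo : IsOpen Ω) (hΩb : Bornology.IsBounded Ω)
    (hpc : Continuous (Function.uncurry p)) (hv : SemiTrivialProfile Ω p D M v)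
    (hψ : MemLp ψ 2 (volume.restrict Ω)) :
    quadForm Ω p D (fun y => M y - v y) ψ
      =ᵐ[volume.restrict Ω] fun x => D * ∫ y in Ω, piconeKernel p v ψ (x, y) := by
  have : IsFiniteMeasure (volume.restrict Ω) := isFiniteMeasure_restrict.2 hΩb.measure_lt_top.ne
  exact ae_restrict_of_forall_mem hΩo.measurableSet fun x hx =>
    quadForm_eq_integral_piconeKernel hΩo hΩb hpc hv (hψ.integrable one_le_two)
      (subset_closure hx)

lemma integrable_quadForm (hΩo : IsOpen Ω) (hΩb : Bornology.IsBounded Ω)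
    (hpc : Continuous (Function.uncurry p)) (hv : SemiTrivialProfile Ω p D M v)
    (hψ : MemLp ψ 2 (volume.restrict Ω)) :
    Integrable (quadForm Ω p D (fun y => M y - v y) ψ) (volume.restrict Ω) :=
  ((integrable_piconeKernel hΩo hΩb hpc hv.1 (fun x hx => (hv.2.1 x hx).ne')
    hψ).integral_prod_left.const_mul D).congr
    (quadForm_ae_eq_integral_piconeKernel hΩo hΩb hpc hv hψ).symm

theorem setIntegral_quadForm_nonpos (hΩo : IsOpen Ω) (hΩb : Bornology.IsBounded Ω)
    (hpc : Continuous (Function.uncurry p)) (hp0 : ∀ x y, 0 ≤ p x y) (hps : SymmKernel p)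
    (hD : 0 ≤ D) (hv : SemiTrivialProfile Ω p D M v) (hψ : MemLp ψ 2 (volume.restrict Ω)) :
    ∫ x in Ω, quadForm Ω p D (fun y => M y - v y) ψ x ≤ 0 := by
  have hH : Integrable (piconeKernel p v ψ) ((volume.restrict Ω).prod (volume.restrict Ω)) :=
    integrable_piconeKernel hΩo hΩb hpc hv.1 (fun x hx => (hv.2.1 x hx).ne') hψ
  have hmem : ∀ᵐ z ∂(volume.restrict Ω).prod (volume.restrict Ω), z ∈ Ω ×ˢ Ω := by
    rw [Measure.prod_restrict]
    exact ae_restrict_mem (hΩo.measurableSet.prod hΩo.measurableSet)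
  have hsymm :
      2 * ∫ z, piconeKernel p v ψ z ∂(volume.restrict Ω).prod (volume.restrict Ω) ≤ 0 :=
    calc 2 * ∫ z, piconeKernel p v ψ z ∂(volume.restrict Ω).prod (volume.restrict Ω)
        = ∫ z, (piconeKernel p v ψ z + piconeKernel p v ψ z.swap)
            ∂(volume.restrict Ω).prod (volume.restrict Ω) := by
          rw [integral_add hH (hH.swap : Integrable (fun z => piconeKernel p v ψ z.swap) _),
            integral_prod_swap]
          ring
      _ ≤ 0 := integral_nonpos_of_ae (hmem.mono fun z hz =>
          piconeKernel_add_swap_nonpos hp0 hps (hv.2.1 _ (subset_closure hz.1))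
            (hv.2.1 _ (subset_closure hz.2)))
  rw [integral_congr_ae (quadForm_ae_eq_integral_piconeKernel hΩo hΩb hpc hv hψ),
    integral_const_mul, ← integral_prod _ hH]
  exact mul_nonpos_of_nonneg_of_nonpos hD (by linarith)

lemma rayleighQuotient_le (hΩo : IsOpen Ω) (hΩb : Bornology.IsBounded Ω)
    (hpc : Continuous (Function.uncurry p)) (hp0 : ∀ x y, 0 ≤ p x y) (hps : SymmKernel p)
    (hD : 0 ≤ D) (hv : SemiTrivialProfile Ω p D M v) {w : Pt n → ℝ}
    (hw : ContinuousOn w (closure Ω)) {C : ℝ} (hwC : ∀ x ∈ Ω, w x ≤ C)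
    (hψ : MemLp ψ 2 (volume.restrict Ω))
    (hψ0 : ¬ ψ =ᵐ[volume.restrict Ω] (fun _ => (0:ℝ))) :
    rayleighQuotient Ω p D (fun x => M x - v x + w x) ψ ≤ C := by
  have hwψ : IntegrableOn (fun x => w x * ψ x ^ 2) Ω :=
    IntegrableOn.continuousOn_mul_of_subset hw hψ.integrable_sq hΩb.isCompact_closure
      hΩo.measurableSet subset_closure
  have hsplit : ∫ x in Ω, quadForm Ω p D (fun x => M x - v x + w x) ψ x
      = (∫ x in Ω, quadForm Ω p D (fun x => M x - v x) ψ x) + ∫ x in Ω, w x * ψ x ^ 2 := by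
    rw [← integral_add (integrable_quadForm hΩo hΩb hpc hv hψ) hwψ]
    refine integral_congr_ae (ae_of_all _ fun x => ?_)
    simp only [quadForm]
    ring
  rw [rayleighQuotient, div_le_iff₀ (integral_sq_pos hψ hψ0), hsplit, ← integral_const_mul]
  calc (∫ x in Ω, quadForm Ω p D (fun x => M x - v x) ψ x) + ∫ x in Ω, w x * ψ x ^ 2
      ≤ 0 + ∫ x in Ω, C * ψ x ^ 2 :=
        add_le_add (setIntegral_quadForm_nonpos hΩo hΩb hpc hp0 hps hD hv hψ)
          (setIntegral_mono_on hwψ (hψ.integrable_sq.const_mul C) hΩo.measurableSet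
            fun x hx => mul_le_mul_of_nonneg_right (hwC x hx) (sq_nonneg _))
    _ = ∫ x in Ω, C * ψ x ^ 2 := zero_add _

lemma rayleighQuotient_self (hΩo : IsOpen Ω) (hv : SemiTrivialProfile Ω p D M v)
    (w : Pt n → ℝ) :
    rayleighQuotient Ω p D (fun x => M x - v x + w x) v
      = (∫ x in Ω, w x * v x ^ 2) / ∫ x in Ω, v x ^ 2 := by
  rw [rayleighQuotient]
  congr 1
  refine setIntegral_congr_fun hΩo.measurableSet fun x hx => ?_
  simp only [quadForm]
  linear_combination v x * hv.2.2 x (subset_closure hx)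

lemma SemiTrivialProfile.memLp (hΩo : IsOpen Ω) (hΩb : Bornology.IsBounded Ω)
    (hv : SemiTrivialProfile Ω p D M v) : MemLp v 2 (volume.restrict Ω) := by
  have : IsFiniteMeasure (volume.restrict Ω) := isFiniteMeasure_restrict.2 hΩb.measure_lt_top.ne
  obtain ⟨C, hC⟩ := hΩb.isCompact_closure.exists_bound_of_continuousOn hv.1
  exact MemLp.of_bound ((hv.1.mono subset_closure).aestronglyMeasurable hΩo.measurableSet) C
    (ae_restrict_of_forall_mem hΩo.measurableSet fun x hx => hC x (subset_closure hx))

lemma SemiTrivialProfile.not_ae_eq_zero (hΩo : IsOpen Ω) (hne : Ω.Nonempty)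
    (hv : SemiTrivialProfile Ω p D M v) : ¬ v =ᵐ[volume.restrict Ω] (fun _ => (0:ℝ)) := by
  intro h
  obtain ⟨x, hx⟩ := hne
  exact (hv.2.1 x (subset_closure hx)).ne'
    (Measure.eqOn_open_of_ae_eq h hΩo (hv.1.mono subset_closure) continuousOn_const hx)

theorem setIntegral_mul_sq_div_le_stabIdx (hΩo : IsOpen Ω) (hΩb : Bornology.IsBounded Ω)
    (hne : Ω.Nonempty) (hpc : Continuous (Function.uncurry p)) (hp0 : ∀ x y, 0 ≤ p x y)
    (hps : SymmKernel p) (hD : 0 ≤ D) (hv : SemiTrivialProfile Ω p D M v) {w : Pt n → ℝ}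
    (hw : ContinuousOn w (closure Ω)) :
    (∫ x in Ω, w x * v x ^ 2) / (∫ x in Ω, v x ^ 2)
      ≤ stabIdx Ω p D (fun x => M x - v x + w x) := by
  obtain ⟨C, hC⟩ := hΩb.isCompact_closure.exists_bound_of_continuousOn hw
  rw [← rayleighQuotient_self hΩo hv]
  exact rayleighQuotient_le_stabIdx
    (fun φ hφ hφ0 => rayleighQuotient_le hΩo hΩb hpc hp0 hps hD hv hw
      (fun x hx => (le_abs_self _).trans (hC x (subset_closure hx))) hφ hφ0)
    (hv.memLp hΩo hΩb) (hv.not_ae_eq_zero hΩo hne)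

lemma setIntegral_mul_sq_nonpos_of_stabIdx_nonpos (hΩo : IsOpen Ω)
    (hΩb : Bornology.IsBounded Ω) (hne : Ω.Nonempty) (hpc : Continuous (Function.uncurry p))
    (hp0 : ∀ x y, 0 ≤ p x y) (hps : SymmKernel p) (hD : 0 ≤ D)
    (hv : SemiTrivialProfile Ω p D M v) {w : Pt n → ℝ} (hw : ContinuousOn w (closure Ω))
    (hstab : stabIdx Ω p D (fun x => M x - v x + w x) ≤ 0) :
    ∫ x in Ω, w x * v x ^ 2 ≤ 0 := by
  have hquot := (setIntegral_mul_sq_div_le_stabIdx hΩo hΩb hne hpc hp0 hps hD hv hw).trans hstab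
  rwa [div_le_iff₀ (setIntegral_pos_of_continuousOn_closure (f := fun x => v x ^ 2) hΩo hΩb hne
    (hv.1.pow 2) fun x hx => pow_pos (hv.2.1 x (subset_closure hx)) 2), zero_mul] at hquot

theorem stabIdx_eq_zero_of_eqOn_zero (hΩo : IsOpen Ω) (hΩb : Bornology.IsBounded Ω)
    (hne : Ω.Nonempty) (hpc : Continuous (Function.uncurry p)) (hp0 : ∀ x y, 0 ≤ p x y)
    (hps : SymmKernel p) (hD : 0 ≤ D) (hv : SemiTrivialProfile Ω p D M v) {w : Pt n → ℝ}
    (hw : ContinuousOn w (closure Ω)) (hw0 : Set.EqOn w 0 Ω) :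
    stabIdx Ω p D (fun x => M x - v x + w x) = 0 := by
  refine le_antisymm (stabIdx_le_of_forall_rayleighQuotient_le
    (fun φ hφ hφ0 => rayleighQuotient_le hΩo hΩb hpc hp0 hps hD hv hw
      (fun x hx => (hw0 hx).le) hφ hφ0) (hv.memLp hΩo hΩb) (hv.not_ae_eq_zero hΩo hne)) ?_
  have hlow := setIntegral_mul_sq_div_le_stabIdx hΩo hΩb hne hpc hp0 hps hD hv hw
  rwa [setIntegral_congr_fun hΩo.measurableSet (g := fun _ => 0) fun x hx => by simp [hw0 hx],
    integral_zero, zero_div] at hlow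

end Nonlocal

theorem stmt_0_general {n : ℕ} (Ω : Set (Pt n)) (hΩ : IsBoundedDomain Ω)
    (k p : Pt n → Pt n → ℝ)
    (hk : IsDispersalKernel k) (hp : IsDispersalKernel p)
    (hks : SymmKernel k) (hps : SymmKernel p)
    (m M : Pt n → ℝ)
    (d D b c : ℝ) (hd : 0 < d) (hD : 0 < D) (hb : 0 < b)
    (hbc : b * c ≤ 1)
    (ud vD : Pt n → ℝ)
    (hud : SemiTrivialProfile Ω k d m ud) (hvD : SemiTrivialProfile Ω p D M vD) :
    (stabIdx Ω p D (fun x => M x - b * ud x) ≤ 0 →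
      stabIdx Ω k d (fun x => m x - c * vD x) ≤ 0 →
      stabIdx Ω p D (fun x => M x - b * ud x) = 0 ∧
      stabIdx Ω k d (fun x => m x - c * vD x) = 0 ∧
      b * c = 1 ∧ ∀ x ∈ closure Ω, b * ud x = vD x) ∧
    (b * c = 1 → (∀ x ∈ closure Ω, b * ud x = vD x) →
      stabIdx Ω p D (fun x => M x - b * ud x) = 0 ∧
      stabIdx Ω k d (fun x => m x - c * vD x) = 0) := by
  obtain ⟨hΩo, hΩc, hΩb⟩ := hΩ
  have hne : Ω.Nonempty := hΩc.nonempty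
  have hμ : (fun x => M x - b * ud x) = fun x => M x - vD x + (vD x - b * ud x) := by
    funext x; ring
  have hν : (fun x => m x - c * vD x) = fun x => m x - ud x + (ud x - c * vD x) := by
    funext x; ring
  have hbu : ContinuousOn (fun x => b * ud x) (closure Ω) := continuousOn_const.mul hud.1
  have hw₁ : ContinuousOn (fun x => vD x - b * ud x) (closure Ω) := hvD.1.sub hbu
  have hw₂ : ContinuousOn (fun x => ud x - c * vD x) (closure Ω) :=
    hud.1.sub (continuousOn_const.mul hvD.1)
  rw [hμ, hν]
  have hconverse : Set.EqOn (fun x => b * ud x) vD Ω → b * c = 1 →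
      stabIdx Ω p D (fun x => M x - vD x + (vD x - b * ud x)) = 0 ∧
      stabIdx Ω k d (fun x => m x - ud x + (ud x - c * vD x)) = 0 := fun hbuv hbc₁ =>
    ⟨stabIdx_eq_zero_of_eqOn_zero hΩo hΩb hne hp.1 hp.2.1 hps hD.le hvD hw₁
        fun x hx => sub_eq_zero.2 (hbuv hx).symm,
      stabIdx_eq_zero_of_eqOn_zero hΩo hΩb hne hk.1 hk.2.1 hks hd.le hud hw₂
        fun x hx => by simp [← hbuv hx, ← mul_assoc, mul_comm c b, hbc₁]⟩
  refine ⟨fun hμ₀ hν₀ => ?_,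
    fun hbc₁ hbuv => hconverse (fun x hx => hbuv x (subset_closure hx)) hbc₁⟩
  have h₁ :=
    setIntegral_mul_sq_nonpos_of_stabIdx_nonpos hΩo hΩb hne hp.1 hp.2.1 hps hD.le hvD hw₁ hμ₀
  have h₂ :=
    setIntegral_mul_sq_nonpos_of_stabIdx_nonpos hΩo hΩb hne hk.1 hk.2.1 hks hd.le hud hw₂ hν₀
  have hud₀ : ∀ x ∈ Ω, 0 < ud x := fun x hx => hud.2.1 x (subset_closure hx)
  have hbuv := eqOn_const_mul_of_setIntegral_nonpos hΩo hΩb hud.1 hvD.1 hud₀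
    (fun x hx => hvD.2.1 x (subset_closure hx)) hb hbc h₁ h₂
  have hbc₁ :=
    hbc.antisymm (one_le_mul_of_setIntegral_nonpos hΩo hΩb hne hud.1 hud₀ hbuv h₂)
  exact ⟨(hconverse hbuv hbc₁).1, (hconverse hbuv hbc₁).2, hbc₁,
    hbuv.of_subset_closure hbu hvD.1 subset_closure subset_rfl⟩

theorem stmt_0 {n : ℕ} (Ω : Set (Pt n)) (hΩ : IsBoundedDomain Ω)
    (k p : Pt n → Pt n → ℝ)
    (hk : IsDispersalKernel k) (hp : IsDispersalKernel p)
    (hks : SymmKernel k) (hps : SymmKernel p)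
    (m M : Pt n → ℝ)
    (hm : ContinuousOn m (closure Ω)) (hM : ContinuousOn M (closure Ω))
    (hmnc : Nonconstant Ω m) (hMnc : Nonconstant Ω M)
    (d D b c : ℝ) (hd : 0 < d) (hD : 0 < D) (hb : 0 < b) (hc : 0 < c)
    (hbc : b * c ≤ 1)
    (ud vD : Pt n → ℝ)
    (hud : SemiTrivialProfile Ω k d m ud) (hvD : SemiTrivialProfile Ω p D M vD) :
    (stabIdx Ω p D (fun x => M x - b * ud x) ≤ 0 →
      stabIdx Ω k d (fun x => m x - c * vD x) ≤ 0 →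
      stabIdx Ω p D (fun x => M x - b * ud x) = 0 ∧
      stabIdx Ω k d (fun x => m x - c * vD x) = 0 ∧
      b * c = 1 ∧ ∀ x ∈ closure Ω, b * ud x = vD x) ∧
    (b * c = 1 → (∀ x ∈ closure Ω, b * ud x = vD x) →
      stabIdx Ω p D (fun x => M x - b * ud x) = 0 ∧
      stabIdx Ω k d (fun x => m x - c * vD x) = 0) :=
  stmt_0_general Ω hΩ k p hk hp hks hps m M d D b c hd hD hb hbc ud vD hud hvD
end
end

section
/- Let Ω ⊂ ℝⁿ be a nonempty bounded domain, let u, v ∈ C(Ω̄) with u(x) > 0 and v(x) > 0 for all x ∈ Ω̄, and let b, c > 0 be constants with bc ≤ 1. If ∫_Ω (v³ − b u v²) dx ≤ 0 and ∫_Ω (u³ − c v u²) dx ≤ 0, then ∫_Ω (b u − v)²(b u + v) dx ≤ 0; consequently b·u(x) = v(x) for every x ∈ Ω̄ and bc = 1. -/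
open MeasureTheory Topology Filter

noncomputable section

/-! Expanding, `b³(u³ - c v u²) + (v³ - b u v²) - (b u - v)²(b u + v) = b²u²v(1 - bc) ≥ 0`,
so the two integral hypotheses bound `∫ (b u - v)²(b u + v)` by `0`. That integrand is continuous and
nonnegative on the open set `Ω`, hence vanishes there: `b u = v` on `Ω`, and by continuity on its
closure. Then `u³ - c v u² = (1 - bc) u³` on `Ω`, which would be positive if `bc < 1`, against
the second hypothesis. -/

theorem sq_sub_mul_add_le_of_mul_le_one {b c u v : ℝ} (hv : 0 ≤ v) (hbc : b * c ≤ 1) :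
    (b * u - v) ^ 2 * (b * u + v) ≤
      b ^ 3 * (u ^ 3 - c * v * u ^ 2) + (v ^ 3 - b * u * v ^ 2) := by
  have hdiff : b ^ 3 * (u ^ 3 - c * v * u ^ 2) + (v ^ 3 - b * u * v ^ 2)
      - (b * u - v) ^ 2 * (b * u + v) = (b * u) ^ 2 * v * (1 - b * c) := by ring
  have : 0 ≤ (b * u) ^ 2 * v * (1 - b * c) := by
    have := sub_nonneg.mpr hbc
    positivity
  linarith

section

variable {X : Type*} [TopologicalSpace X] [MeasurableSpace X] [OpensMeasurableSpace X]
  {μ : Measure X} {s : Set X}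

theorem IsCompact.integrableOn_of_continuousOn_closure [T2Space X] [IsFiniteMeasureOnCompacts μ]
    {f : X → ℝ} (hs : IsCompact (closure s)) (hf : ContinuousOn f (closure s)) :
    IntegrableOn f s μ :=
  (hf.integrableOn_compact hs).mono_set subset_closure

theorem IsOpen.eqOn_zero_of_setIntegral_nonpos [μ.IsOpenPosMeasure] {f : X → ℝ} (hs : IsOpen s)
    (hf : ContinuousOn f s) (hfi : IntegrableOn f s μ) (hf0 : ∀ x ∈ s, 0 ≤ f x)
    (h : ∫ x in s, f x ∂μ ≤ 0) : Set.EqOn f 0 s := by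
  have hf0_ae : 0 ≤ᵐ[μ.restrict s] f := by
    filter_upwards [ae_restrict_mem hs.measurableSet] with x hx using hf0 x hx
  have hint : ∫ x in s, f x ∂μ = 0 := le_antisymm h (integral_nonneg_of_ae hf0_ae)
  exact μ.eqOn_open_of_ae_eq ((setIntegral_eq_zero_iff_of_nonneg_ae hf0_ae hfi).mp hint) hs hf
    continuousOn_const

variable [T2Space X] [IsFiniteMeasureOnCompacts μ] {u v : X → ℝ} {b c : ℝ}
  (hsc : IsCompact (closure s)) (hu : ContinuousOn u (closure s)) (hv : ContinuousOn v (closure s))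
include hsc hu hv

theorem setIntegral_sq_sub_mul_add_le (hs : MeasurableSet s) (hv0 : ∀ x ∈ s, 0 ≤ v x)
    (hbc : b * c ≤ 1) :
    ∫ x in s, (b * u x - v x) ^ 2 * (b * u x + v x) ∂μ ≤
      b ^ 3 * (∫ x in s, (u x ^ 3 - c * v x * u x ^ 2) ∂μ)
        + ∫ x in s, (v x ^ 3 - b * u x * v x ^ 2) ∂μ := by
  have hA : IntegrableOn (fun x => u x ^ 3 - c * v x * u x ^ 2) s μ :=
    hsc.integrableOn_of_continuousOn_closure (by fun_prop)
  have hB : IntegrableOn (fun x => v x ^ 3 - b * u x * v x ^ 2) s μ :=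
    hsc.integrableOn_of_continuousOn_closure (by fun_prop)
  rw [← integral_const_mul, ← integral_add (hA.const_mul _) hB]
  exact setIntegral_mono_on (hsc.integrableOn_of_continuousOn_closure (by fun_prop))
    ((hA.const_mul _).add hB) hs fun x hx => sq_sub_mul_add_le_of_mul_le_one (hv0 x hx) hbc

variable [μ.IsOpenPosMeasure] (hs : IsOpen s) (hupos : ∀ x ∈ s, 0 < u x)
include hs hupos

theorem eqOn_const_mul_of_setIntegral_sq_sub_mul_add_nonpos (hvpos : ∀ x ∈ s, 0 < v x)
    (hb : 0 ≤ b) (h : ∫ x in s, (b * u x - v x) ^ 2 * (b * u x + v x) ∂μ ≤ 0) :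
    Set.EqOn (fun x => b * u x) v s := by
  have hsum_pos {x} (hx : x ∈ s) : 0 < b * u x + v x := by
    have := hupos x hx
    have := hvpos x hx
    positivity
  have hW0 := hs.eqOn_zero_of_setIntegral_nonpos (ContinuousOn.mono (by fun_prop) subset_closure)
    (hsc.integrableOn_of_continuousOn_closure (by fun_prop))
    (fun x hx => mul_nonneg (sq_nonneg _) (hsum_pos hx).le) h
  intro x hx
  simpa [(hsum_pos hx).ne', sub_eq_zero] using hW0 hx

theorem one_le_mul_of_setIntegral_cube_sub_nonpos (hne : s.Nonempty)
    (hvu : Set.EqOn (fun x => b * u x) v s)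
    (h : ∫ x in s, (u x ^ 3 - c * v x * u x ^ 2) ∂μ ≤ 0) : 1 ≤ b * c := by
  by_contra! hlt
  have hA_pos {x} (hx : x ∈ s) : 0 < u x ^ 3 - c * v x * u x ^ 2 := by
    rw [← hvu hx, show ∀ w : ℝ, w ^ 3 - c * (b * w) * w ^ 2 = (1 - b * c) * w ^ 3 by
      intro w; ring]
    exact mul_pos (sub_pos.mpr hlt) (pow_pos (hupos x hx) 3)
  obtain ⟨x₀, hx₀⟩ := hne
  have hA0 := hs.eqOn_zero_of_setIntegral_nonpos (ContinuousOn.mono (by fun_prop) subset_closure)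
    (hsc.integrableOn_of_continuousOn_closure (by fun_prop)) (fun x hx => (hA_pos hx).le) h hx₀
  exact (hA_pos hx₀).ne' hA0

end

theorem stmt_1_general {n : ℕ} (Ω : Set (Pt n)) (hΩ : IsBoundedDomain Ω)
    (u v : Pt n → ℝ) (hu : ContinuousOn u (closure Ω)) (hv : ContinuousOn v (closure Ω))
    (hupos : ∀ x ∈ closure Ω, 0 < u x) (hvpos : ∀ x ∈ closure Ω, 0 < v x)
    (b c : ℝ) (hb : 0 < b) (hbc : b * c ≤ 1)
    (h1 : (∫ x in Ω, (v x ^ 3 - b * u x * v x ^ 2)) ≤ 0)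
    (h2 : (∫ x in Ω, (u x ^ 3 - c * v x * u x ^ 2)) ≤ 0) :
    (∫ x in Ω, (b * u x - v x) ^ 2 * (b * u x + v x)) ≤ 0 ∧
    (∀ x ∈ closure Ω, b * u x = v x) ∧ b * c = 1 := by
  obtain ⟨hopen, hconn, hbdd⟩ := hΩ
  have hcl := hbdd.isCompact_closure
  have huΩ (x) (hx : x ∈ Ω) : 0 < u x := hupos x (subset_closure hx)
  have hvΩ (x) (hx : x ∈ Ω) : 0 < v x := hvpos x (subset_closure hx)
  have hW : (∫ x in Ω, (b * u x - v x) ^ 2 * (b * u x + v x)) ≤ 0 :=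
    (setIntegral_sq_sub_mul_add_le hcl hu hv hopen.measurableSet (fun x hx => (hvΩ x hx).le)
      hbc).trans (add_nonpos (mul_nonpos_of_nonneg_of_nonpos (by positivity) h2) h1)
  have hvu : Set.EqOn (fun x => b * u x) v (closure Ω) :=
    (eqOn_const_mul_of_setIntegral_sq_sub_mul_add_nonpos hcl hu hv hopen huΩ hvΩ hb.le
      hW).of_subset_closure (by fun_prop) hv subset_closure le_rfl
  exact ⟨hW, hvu, le_antisymm hbc <| one_le_mul_of_setIntegral_cube_sub_nonpos hcl hu hv hopen
    huΩ hconn.nonempty (hvu.mono subset_closure) h2⟩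

theorem stmt_1 {n : ℕ} (Ω : Set (Pt n)) (hΩ : IsBoundedDomain Ω)
    (u v : Pt n → ℝ) (hu : ContinuousOn u (closure Ω)) (hv : ContinuousOn v (closure Ω))
    (hupos : ∀ x ∈ closure Ω, 0 < u x) (hvpos : ∀ x ∈ closure Ω, 0 < v x)
    (b c : ℝ) (hb : 0 < b) (hc : 0 < c) (hbc : b * c ≤ 1)
    (h1 : (∫ x in Ω, (v x ^ 3 - b * u x * v x ^ 2)) ≤ 0)
    (h2 : (∫ x in Ω, (u x ^ 3 - c * v x * u x ^ 2)) ≤ 0) :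
    (∫ x in Ω, (b * u x - v x) ^ 2 * (b * u x + v x)) ≤ 0 ∧
    (∀ x ∈ closure Ω, b * u x = v x) ∧ b * c = 1 :=
  stmt_1_general Ω hΩ u v hu hv hupos hvpos b c hb hbc h1 h2
end
end

section
/- Let Ω ⊂ ℝⁿ be a nonempty bounded domain, let k : Ω̄ × Ω̄ → ℝ be continuous, nonnegative and symmetric (k(x,y) = k(y,x)), and let u, u* ∈ C(Ω̄) satisfy u(x) > u*(x) > 0 for all x ∈ Ω̄. Then ∫_Ω ∫_Ω k(x,y)(u*(x)u(y) − u(x)u*(y)) · (u(x) − u*(x))²/(u(x)u*(x)) dy dx = (1/2) ∫_Ω ∫_Ω k(x,y)(u*(x)u(y) − u(x)u*(y))² · (1/(u(x)u(y)) − 1/(u*(x)u*(y))) dy dx, and this quantity is ≤ 0. -/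
open MeasureTheory Topology Filter

noncomputable section

/-!
Exchanging `x` and `y` and using the symmetry of `k`, the integrand on the left plus its swap
is exactly the integrand on the right, by a pointwise algebraic identity. Hence the left side
is half of the symmetrised double integral, whose integrand is nonpositive because
`u x * u y > us x * us y`.
-/

section

variable {X : Type*} [MeasurableSpace X]

theorem integrable_prod_restrict_of_continuousOn_closure [TopologicalSpace X]
    [OpensMeasurableSpace X] [SecondCountableTopology X] [T2Space X]
    {μ : Measure X} [IsFiniteMeasureOnCompacts μ] [SFinite μ] {s : Set X}
    (hs : IsCompact (closure s)) {F : X × X → ℝ} (hF : ContinuousOn F (closure s ×ˢ closure s)) :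
    Integrable F ((μ.restrict s).prod (μ.restrict s)) := by
  rw [Measure.prod_restrict]
  exact (hF.integrableOn_compact (hs.prod hs)).mono_set
    (Set.prod_mono subset_closure subset_closure)

theorem integral_integral_eq_half_of_add_swap {μ : Measure X} [SFinite μ]
    {f g : X → X → ℝ} (hf : Integrable (Function.uncurry f) (μ.prod μ))
    (hfg : ∀ᵐ p ∂μ.prod μ, f p.1 p.2 + f p.2 p.1 = g p.1 p.2) :
    ∫ x, ∫ y, f x y ∂μ ∂μ = 1 / 2 * ∫ x, ∫ y, g x y ∂μ ∂μ := by
  have hf_swap : Integrable (fun p : X × X => f p.2 p.1) (μ.prod μ) := hf.swap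
  have hg : Integrable (Function.uncurry g) (μ.prod μ) := (hf.add hf_swap).congr hfg
  have h_swap : ∫ p, f p.2 p.1 ∂μ.prod μ = ∫ p, f p.1 p.2 ∂μ.prod μ :=
    integral_prod_swap (Function.uncurry f)
  rw [integral_integral hf, integral_integral hg, ← integral_congr_ae hfg,
    integral_add (f := fun p => f p.1 p.2) hf hf_swap, h_swap]
  ring

theorem ae_prod_restrict_mem {μ : Measure X} [SFinite μ] {s : Set X} (hs : MeasurableSet s) :
    ∀ᵐ p ∂(μ.restrict s).prod (μ.restrict s), p.1 ∈ s ∧ p.2 ∈ s := by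
  rw [Measure.prod_restrict]
  exact ae_restrict_of_forall_mem (hs.prod hs) fun p hp => hp

end

theorem cross_term_add_swap {a b c d : ℝ} (ha : a ≠ 0) (hb : b ≠ 0) (hc : c ≠ 0) (hd : d ≠ 0) :
    (b * c - a * d) * ((a - b) ^ 2 / (a * b)) + (d * a - c * b) * ((c - d) ^ 2 / (c * d)) =
      (b * c - a * d) ^ 2 * (1 / (a * c) - 1 / (b * d)) := by
  field_simp
  ring

theorem one_div_mul_sub_one_div_mul_nonpos {a b c d : ℝ} (hb : 0 < b) (hd : 0 < d)
    (hba : b ≤ a) (hdc : d ≤ c) : 1 / (a * c) - 1 / (b * d) ≤ 0 :=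
  sub_nonpos.2 <|
    one_div_le_one_div_of_le (mul_pos hb hd) (mul_le_mul hba hdc hd.le (hb.trans_le hba).le)

theorem stmt_2 {n : ℕ} (Ω : Set (Pt n)) (hΩ : IsBoundedDomain Ω)
    (k : Pt n → Pt n → ℝ)
    (hk : ContinuousOn (Function.uncurry k) (closure Ω ×ˢ closure Ω))
    (hknn : ∀ x ∈ closure Ω, ∀ y ∈ closure Ω, 0 ≤ k x y)
    (hksymm : ∀ x ∈ closure Ω, ∀ y ∈ closure Ω, k x y = k y x)
    (u us : Pt n → ℝ) (hu : ContinuousOn u (closure Ω)) (hus : ContinuousOn us (closure Ω))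
    (hord : ∀ x ∈ closure Ω, us x < u x) (huspos : ∀ x ∈ closure Ω, 0 < us x) :
    (∫ x in Ω, ∫ y in Ω,
        k x y * (us x * u y - u x * us y) * ((u x - us x) ^ 2 / (u x * us x)))
      = (1 / 2) * ∫ x in Ω, ∫ y in Ω,
        k x y * (us x * u y - u x * us y) ^ 2 *
          (1 / (u x * u y) - 1 / (us x * us y)) ∧
    (∫ x in Ω, ∫ y in Ω,
        k x y * (us x * u y - u x * us y) * ((u x - us x) ^ 2 / (u x * us x))) ≤ 0 := by
  obtain ⟨hopen, -, hbdd⟩ := hΩ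
  have hupos : ∀ x ∈ closure Ω, 0 < u x := fun x hx => (huspos x hx).trans (hord x hx)
  have hfst {v : Pt n → ℝ} (hv : ContinuousOn v (closure Ω)) :
      ContinuousOn (fun p : Pt n × Pt n => v p.1) (closure Ω ×ˢ closure Ω) :=
    hv.comp continuous_fst.continuousOn fun _ hp => hp.1
  have hsnd {v : Pt n → ℝ} (hv : ContinuousOn v (closure Ω)) :
      ContinuousOn (fun p : Pt n × Pt n => v p.2) (closure Ω ×ˢ closure Ω) :=
    hv.comp continuous_snd.continuousOn fun _ hp => hp.2
  have hint : Integrable (Function.uncurry fun x y =>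
      k x y * (us x * u y - u x * us y) * ((u x - us x) ^ 2 / (u x * us x)))
      ((volume.restrict Ω).prod (volume.restrict Ω)) := by
    refine integrable_prod_restrict_of_continuousOn_closure hbdd.isCompact_closure <|
      (hk.mul (((hfst hus).mul (hsnd hu)).sub ((hfst hu).mul (hsnd hus)))).mul <|
        (((hfst hu).sub (hfst hus)).pow 2).div ((hfst hu).mul (hfst hus)) fun p hp => ?_
    exact (mul_pos (hupos _ hp.1) (huspos _ hp.1)).ne'
  have hhalf := integral_integral_eq_half_of_add_swap hint (g := fun x y =>
      k x y * (us x * u y - u x * us y) ^ 2 * (1 / (u x * u y) - 1 / (us x * us y))) <|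
    (ae_prod_restrict_mem hopen.measurableSet).mono fun ⟨x, y⟩ ⟨hx, hy⟩ => by
      replace hx := subset_closure hx
      replace hy := subset_closure hy
      dsimp only
      rw [hksymm y hy x hx, mul_assoc, mul_assoc (k x y), ← mul_add, cross_term_add_swap
        (hupos x hx).ne' (huspos x hx).ne' (hupos y hy).ne' (huspos y hy).ne', mul_assoc]
  refine ⟨hhalf, hhalf ▸ mul_nonpos_of_nonneg_of_nonpos (by norm_num) ?_⟩
  refine setIntegral_nonpos hopen.measurableSet fun x hx =>
    setIntegral_nonpos hopen.measurableSet fun y hy => ?_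
  replace hx := subset_closure hx
  replace hy := subset_closure hy
  exact mul_nonpos_of_nonneg_of_nonpos (mul_nonneg (hknn x hx y hy) (sq_nonneg _))
    (one_div_mul_sub_one_div_mul_nonpos (huspos x hx) (huspos y hy) (hord x hx).le (hord y hy).le)
end
end

section
/- Assume k and p are symmetric dispersal kernels, m, M ∈ C(Ω̄) are nonconstant, and d, D, b, c > 0. Let (u,v) and (u*,v*) be two positive steady states of the competition system with u(x) > u*(x) and v(x) < v*(x) for all x ∈ Ω̄, and set w = u − u*, z = v − v*. Then ∫_Ω (w + c z) w² dx ≤ 0 and ∫_Ω (b w + z) z² dx ≥ 0. -/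
open MeasureTheory Topology Filter

noncomputable section

/-! Dividing the two equations for `u` and `u*` by `u` and `u*` and subtracting gives
`w + c z = d (K[u]/u - K[u*]/u*)`, and the `∫ k(y,x) dy` parts cancel. Multiplying by `w²` and
integrating, the right side becomes `d ∫∫ k(x,y) g(x) (u(y) u*(x) - u*(y) u(x))` with
`g = w² / (u u*) = r + 1/r - 2`, `r = u/u*`. Symmetrizing with `k(x,y) = k(y,x)` turns the integrand
into `k(x,y) (g(x) - g(y)) (u(y) u*(x) - u*(y) u(x))`, which is `≤ 0` because `g` is an increasing
function of `r` on `r > 1` while the last factor has the sign of `r(y) - r(x)`. The same argument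
applies to `v* > v`. -/

theorem ContinuousOn.integrableOn_of_isCompact_closure {X E : Type*} [TopologicalSpace X]
    [T2Space X] [MeasurableSpace X] [OpensMeasurableSpace X] [NormedAddCommGroup E]
    {μ : Measure X} [IsFiniteMeasureOnCompacts μ] {s : Set X} {f : X → E}
    (hs : IsCompact (closure s)) (hf : ContinuousOn f (closure s)) : IntegrableOn f s μ :=
  (hf.integrableOn_compact hs).mono_set subset_closure

theorem integral_nonpos_of_add_swap_nonpos {α : Type*} [MeasurableSpace α] {μ : Measure α}
    [SFinite μ] {H : α × α → ℝ} (hH : Integrable H (μ.prod μ))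
    (hsign : ∀ᵐ q ∂μ.prod μ, H q + H q.swap ≤ 0) : ∫ q, H q ∂μ.prod μ ≤ 0 := by
  have hswap : ∫ q, H q.swap ∂μ.prod μ = ∫ q, H q ∂μ.prod μ := integral_prod_swap H
  have hadd : ∫ q, (H q + H q.swap) ∂μ.prod μ = ∫ q, H q ∂μ.prod μ + ∫ q, H q.swap ∂μ.prod μ :=
    integral_add hH hH.swap
  have hsum : ∫ q, (H q + H q.swap) ∂μ.prod μ ≤ 0 := integral_nonpos_of_ae hsign
  linarith

/-- With `r = a / a'` and `s = b / b'` the first factor is `a' b' (s - r)` and the second is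
`φ r - φ s` for `φ t = t + 1/t - 2`, which is increasing on `t > 1`. -/
theorem mul_sub_mul_mul_sq_div_sub_sq_div_nonpos {a a' b b' : ℝ} (ha' : 0 < a') (hb' : 0 < b')
    (ha : a' < a) (hb : b' < b) :
    (b * a' - b' * a) * ((a - a') ^ 2 / (a * a') - (b - b') ^ 2 / (b * b')) ≤ 0 := by
  have ha0 : 0 < a := ha'.trans ha
  have hb0 : 0 < b := hb'.trans hb
  have hfactor : (b * a' - b' * a) * ((a - a') ^ 2 / (a * a') - (b - b') ^ 2 / (b * b'))
      = -((a * b' - a' * b) ^ 2 * (a * b - a' * b') / (a * a' * (b * b'))) := by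
    field_simp
    ring
  have hprod : 0 ≤ a * b - a' * b' := by nlinarith
  rw [hfactor, neg_nonpos]
  positivity

theorem nlOp_div_sub_nlOp_div {n : ℕ} {Ω : Set (Pt n)} {k : Pt n → Pt n → ℝ}
    {φ ψ : Pt n → ℝ} {x : Pt n} (hφ : IntegrableOn (fun y => k x y * φ y) Ω)
    (hψ : IntegrableOn (fun y => k x y * ψ y) Ω) (hφx : φ x ≠ 0) (hψx : ψ x ≠ 0) :
    nlOp Ω k φ x / φ x - nlOp Ω k ψ x / ψ x
      = (∫ y in Ω, k x y * (φ y * ψ x - ψ y * φ x)) / (φ x * ψ x) := by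
  have hsplit : (∫ y in Ω, k x y * (φ y * ψ x - ψ y * φ x))
      = (∫ y in Ω, k x y * φ y) * ψ x - (∫ y in Ω, k x y * ψ y) * φ x := by
    rw [← integral_mul_const, ← integral_mul_const,
      ← integral_sub (hφ.mul_const _) (hψ.mul_const _)]
    congr 1 with y
    ring
  rw [hsplit, nlOp, nlOp]
  field_simp
  ring

theorem integral_sq_sub_mul_nlOp_div_sub_nlOp_div_nonpos {n : ℕ} {Ω : Set (Pt n)}
    (hΩm : MeasurableSet Ω) (hΩb : Bornology.IsBounded Ω) {k : Pt n → Pt n → ℝ}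
    (hkc : Continuous (Function.uncurry k)) (hk0 : ∀ x y, 0 ≤ k x y) (hks : SymmKernel k)
    {φ ψ : Pt n → ℝ} (hφ : ContinuousOn φ (closure Ω)) (hψ : ContinuousOn ψ (closure Ω))
    (hψ0 : ∀ x ∈ closure Ω, 0 < ψ x) (hψφ : ∀ x ∈ closure Ω, ψ x < φ x) :
    ∫ x in Ω, (φ x - ψ x) ^ 2 * (nlOp Ω k φ x / φ x - nlOp Ω k ψ x / ψ x) ≤ 0 := by
  have hK : IsCompact (closure Ω) := hΩb.isCompact_closure
  have hφ0 : ∀ x ∈ closure Ω, 0 < φ x := fun x hx => (hψ0 x hx).trans (hψφ x hx)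
  set g : Pt n → ℝ := fun x => (φ x - ψ x) ^ 2 / (φ x * ψ x)
  set H : Pt n × Pt n → ℝ :=
    fun q => g q.1 * (k q.1 q.2 * (φ q.2 * ψ q.1 - ψ q.2 * φ q.1)) with hH_def
  have hg : ContinuousOn g (closure Ω) :=
    ((hφ.sub hψ).pow 2).div (hφ.mul hψ) fun x hx => (mul_pos (hφ0 x hx) (hψ0 x hx)).ne'
  have hH : ContinuousOn H (closure (Ω ×ˢ Ω)) := by
    rw [closure_prod_eq]
    have h1 : Set.MapsTo Prod.fst (closure Ω ×ˢ closure Ω) (closure Ω) := fun q hq => hq.1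
    have h2 : Set.MapsTo Prod.snd (closure Ω ×ˢ closure Ω) (closure Ω) := fun q hq => hq.2
    exact (hg.comp continuousOn_fst h1).mul (hkc.continuousOn.mul
      (((hφ.comp continuousOn_snd h2).mul (hψ.comp continuousOn_fst h1)).sub
        ((hψ.comp continuousOn_snd h2).mul (hφ.comp continuousOn_fst h1))))
  have hslice : ∀ x (f : Pt n → ℝ), ContinuousOn f (closure Ω) →
      IntegrableOn (fun y => k x y * f y) Ω := fun x f hf =>
    ((hkc.comp (continuous_const.prodMk continuous_id)).continuousOn.mul hf
      ).integrableOn_of_isCompact_closure hK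
  have hrow : ∀ x ∈ Ω, (φ x - ψ x) ^ 2 * (nlOp Ω k φ x / φ x - nlOp Ω k ψ x / ψ x)
      = ∫ y in Ω, H (x, y) := by
    intro x hx
    rw [nlOp_div_sub_nlOp_div (hslice x φ hφ) (hslice x ψ hψ)
      (hφ0 x (subset_closure hx)).ne' (hψ0 x (subset_closure hx)).ne']
    change _ = ∫ y in Ω, g x * (k x y * (φ y * ψ x - ψ y * φ x))
    rw [integral_const_mul]
    ring
  have hHint : Integrable H ((volume.restrict Ω).prod (volume.restrict Ω)) := by
    rw [Measure.prod_restrict]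
    exact hH.integrableOn_of_isCompact_closure (by rw [closure_prod_eq]; exact hK.prod hK)
  rw [setIntegral_congr_fun hΩm hrow, ← integral_prod H hHint]
  refine integral_nonpos_of_add_swap_nonpos hHint ?_
  rw [Measure.prod_restrict]
  filter_upwards [ae_restrict_mem (hΩm.prod hΩm)] with ⟨x, y⟩ ⟨hx, hy⟩
  have hsym : H (x, y) + H (y, x) = k x y * ((φ y * ψ x - ψ y * φ x) * (g x - g y)) := by
    simp only [hH_def, hks y x]
    ring
  rw [Prod.swap_prod_mk, hsym]
  exact mul_nonpos_of_nonneg_of_nonpos (hk0 x y) (mul_sub_mul_mul_sq_div_sub_sq_div_nonpos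
    (hψ0 x (subset_closure hx)) (hψ0 y (subset_closure hy))
    (hψφ x (subset_closure hx)) (hψφ y (subset_closure hy)))

theorem stmt_3_general {n : ℕ} (Ω : Set (Pt n)) (hΩ : IsBoundedDomain Ω)
    (k p : Pt n → Pt n → ℝ)
    (hk : IsDispersalKernel k) (hp : IsDispersalKernel p)
    (hks : SymmKernel k) (hps : SymmKernel p)
    (m M : Pt n → ℝ)
    (d D b c : ℝ) (hd : 0 < d) (hD : 0 < D)
    (u v us vs : Pt n → ℝ)
    (huv : IsPositiveSteadyState Ω k p d D b c m M u v)
    (husvs : IsPositiveSteadyState Ω k p d D b c m M us vs)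
    (hord1 : ∀ x ∈ closure Ω, us x < u x) (hord2 : ∀ x ∈ closure Ω, v x < vs x) :
    (∫ x in Ω, ((u x - us x) + c * (v x - vs x)) * (u x - us x) ^ 2) ≤ 0 ∧
    0 ≤ (∫ x in Ω, (b * (u x - us x) + (v x - vs x)) * (v x - vs x) ^ 2) := by
  obtain ⟨⟨huc, hvc, hequ, heqv⟩, hupos, hvpos⟩ := huv
  obtain ⟨⟨husc, hvsc, hequs, heqvs⟩, huspos, hvspos⟩ := husvs
  obtain ⟨hΩo, -, hΩb⟩ := hΩ
  have hΩm : MeasurableSet Ω := hΩo.measurableSet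
  have hquot : ∀ {e a a' r r' K K' : ℝ}, a ≠ 0 → a' ≠ 0 → e * K + a * r = 0 →
      e * K' + a' * r' = 0 → e * (K / a - K' / a') = r' - r := by
    intro e a a' r r' K K' ha ha' h h'
    field_simp
    linear_combination a' * h - a * h'
  have hu : ∀ x ∈ Ω, ((u x - us x) + c * (v x - vs x)) * (u x - us x) ^ 2
      = d * ((u x - us x) ^ 2 * (nlOp Ω k u x / u x - nlOp Ω k us x / us x)) := by
    intro x hx
    have hx := subset_closure hx
    linear_combination (-(u x - us x) ^ 2) *
      hquot (hupos x hx).ne' (huspos x hx).ne' (hequ x hx) (hequs x hx)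
  have hv : ∀ x ∈ Ω, (b * (u x - us x) + (v x - vs x)) * (v x - vs x) ^ 2
      = -(D * ((vs x - v x) ^ 2 * (nlOp Ω p vs x / vs x - nlOp Ω p v x / v x))) := by
    intro x hx
    have hx := subset_closure hx
    linear_combination (-(v x - vs x) ^ 2) *
      hquot (hvpos x hx).ne' (hvspos x hx).ne' (heqv x hx) (heqvs x hx)
  constructor
  · rw [setIntegral_congr_fun hΩm hu, integral_const_mul]
    exact mul_nonpos_of_nonneg_of_nonpos hd.le
      (integral_sq_sub_mul_nlOp_div_sub_nlOp_div_nonpos hΩm hΩb hk.1 hk.2.1 hks huc husc huspos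
        hord1)
  · rw [setIntegral_congr_fun hΩm hv, integral_neg, integral_const_mul, neg_nonneg]
    exact mul_nonpos_of_nonneg_of_nonpos hD.le
      (integral_sq_sub_mul_nlOp_div_sub_nlOp_div_nonpos hΩm hΩb hp.1 hp.2.1 hps hvsc hvc hvpos
        hord2)

theorem stmt_3 {n : ℕ} (Ω : Set (Pt n)) (hΩ : IsBoundedDomain Ω)
    (k p : Pt n → Pt n → ℝ)
    (hk : IsDispersalKernel k) (hp : IsDispersalKernel p)
    (hks : SymmKernel k) (hps : SymmKernel p)
    (m M : Pt n → ℝ)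
    (hm : ContinuousOn m (closure Ω)) (hM : ContinuousOn M (closure Ω))
    (hmnc : Nonconstant Ω m) (hMnc : Nonconstant Ω M)
    (d D b c : ℝ) (hd : 0 < d) (hD : 0 < D) (hb : 0 < b) (hc : 0 < c)
    (u v us vs : Pt n → ℝ)
    (huv : IsPositiveSteadyState Ω k p d D b c m M u v)
    (husvs : IsPositiveSteadyState Ω k p d D b c m M us vs)
    (hord1 : ∀ x ∈ closure Ω, us x < u x) (hord2 : ∀ x ∈ closure Ω, v x < vs x) :
    (∫ x in Ω, ((u x - us x) + c * (v x - vs x)) * (u x - us x) ^ 2) ≤ 0 ∧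
    0 ≤ (∫ x in Ω, (b * (u x - us x) + (v x - vs x)) * (v x - vs x) ^ 2) :=
  stmt_3_general Ω hΩ k p hk hp hks hps m M d D b c hd hD u v us vs huv husvs hord1 hord2
end
end

section
/- Let Ω ⊂ ℝⁿ be a nonempty bounded domain, let w, z ∈ C(Ω̄) with w(x) > 0 and z(x) < 0 for all x ∈ Ω̄, and let b, c > 0 be constants with bc ≤ 1. If ∫_Ω (w + c z) w² dx ≤ 0 and ∫_Ω (b w + z) z² dx ≥ 0, then ∫_Ω (w + c z)²(c z − w) dx ≥ 0; consequently bc = 1 and w(x) + c·z(x) = 0 for every x ∈ Ω̄. -/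
open MeasureTheory Topology Filter

noncomputable section

/-!
Put `f = w + c z`. Since `b c ≤ 1` and `w > 0`, pointwise `c³ (b w + z) z² ≤ f (c z)²`, so
`∫ f (c z)² ≥ c³ ∫ (b w + z) z² ≥ 0 ≥ ∫ f w²`. As `f (c z)² - f w² = f² (c z - w)`, this gives
`∫ f² (c z - w) ≥ 0`, while the integrand is `≤ 0` because `c z < 0 < w`. Hence the continuous
integrand vanishes on the open set `Ω`, so `f = 0` there and, by continuity, on `Ω̄`. Then
`c (b w + z) = (b c - 1) w`, and `∫ (b w + z) z² ≥ 0` on a set of positive measure forces `b c ≥ 1`.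
-/

open Set

section Integrals

variable {X : Type*} [TopologicalSpace X] [MeasurableSpace X] [OpensMeasurableSpace X]
  {μ : Measure X} [μ.IsOpenPosMeasure] {U : Set X} {g : X → ℝ}

theorem setIntegral_pos_of_isOpen (hU : IsOpen U) (hne : U.Nonempty) (hg : IntegrableOn g U μ)
    (hpos : ∀ x ∈ U, 0 < g x) : 0 < ∫ x in U, g x ∂μ := by
  have hsupp : U ⊆ Function.support g := fun x hx => (hpos x hx).ne'
  rw [setIntegral_pos_iff_support_of_nonneg_ae
    (ae_restrict_of_forall_mem hU.measurableSet fun x hx => (hpos x hx).le) hg,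
    inter_eq_right.mpr hsupp]
  exact hU.measure_pos μ hne

theorem eqOn_zero_of_setIntegral_eq_zero (hU : IsOpen U) (hg : ContinuousOn g U)
    (hgi : IntegrableOn g U μ) (hnn : ∀ x ∈ U, 0 ≤ g x) (h0 : ∫ x in U, g x ∂μ = 0) :
    EqOn g 0 U :=
  Measure.eqOn_open_of_ae_eq
    ((setIntegral_eq_zero_iff_of_nonneg_ae (ae_restrict_of_forall_mem hU.measurableSet hnn) hgi).mp
      h0) hU hg continuousOn_const

end Integrals

section Competition

variable {X : Type*} [PseudoMetricSpace X] [ProperSpace X] [T2Space X] [MeasurableSpace X]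
  [OpensMeasurableSpace X] {μ : Measure X} [IsFiniteMeasureOnCompacts μ] {U : Set X}
  {w z : X → ℝ} {b c : ℝ}

theorem ContinuousOn.integrableOn_of_isBounded {g : X → ℝ} (hg : ContinuousOn g (closure U))
    (hU : Bornology.IsBounded U) : IntegrableOn g U μ :=
  (hg.integrableOn_compact hU.isCompact_closure).mono_set subset_closure

theorem pow_three_mul_le_of_mul_le_one {w z : ℝ} (hw : 0 ≤ w) (hbc : b * c ≤ 1) :
    c ^ 3 * ((b * w + z) * z ^ 2) ≤ (w + c * z) * (c * z) ^ 2 := by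
  nlinarith [mul_nonneg (mul_nonneg (sub_nonneg.2 hbc) hw) (sq_nonneg (c * z))]

theorem setIntegral_sq_mul_sub_nonneg (hUm : MeasurableSet U) (hU : Bornology.IsBounded U)
    (hw : ContinuousOn w (closure U)) (hz : ContinuousOn z (closure U))
    (hwnn : ∀ x ∈ U, 0 ≤ w x) (hc : 0 ≤ c) (hbc : b * c ≤ 1)
    (h1 : ∫ x in U, (w x + c * z x) * w x ^ 2 ∂μ ≤ 0)
    (h2 : 0 ≤ ∫ x in U, (b * w x + z x) * z x ^ 2 ∂μ) :
    0 ≤ ∫ x in U, (w x + c * z x) ^ 2 * (c * z x - w x) ∂μ := by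
  have hf : ContinuousOn (fun x => w x + c * z x) (closure U) := hw.add (hz.const_smul c)
  have hi1 : IntegrableOn (fun x => (w x + c * z x) * w x ^ 2) U μ :=
    (hf.mul (hw.pow 2)).integrableOn_of_isBounded hU
  have hi2 : IntegrableOn (fun x => (b * w x + z x) * z x ^ 2) U μ :=
    (((hw.const_smul b).add hz).mul (hz.pow 2)).integrableOn_of_isBounded hU
  have hi3 : IntegrableOn (fun x => (w x + c * z x) * (c * z x) ^ 2) U μ :=
    (hf.mul ((hz.const_smul c).pow 2)).integrableOn_of_isBounded hU
  have hcubic : c ^ 3 * ∫ x in U, (b * w x + z x) * z x ^ 2 ∂μ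
      ≤ ∫ x in U, (w x + c * z x) * (c * z x) ^ 2 ∂μ := by
    rw [← integral_const_mul]
    exact setIntegral_mono_on (hi2.const_mul _) hi3 hUm fun x hx =>
      pow_three_mul_le_of_mul_le_one (hwnn x hx) hbc
  have hsplit : ∫ x in U, (w x + c * z x) ^ 2 * (c * z x - w x) ∂μ
      = (∫ x in U, (w x + c * z x) * (c * z x) ^ 2 ∂μ)
        - ∫ x in U, (w x + c * z x) * w x ^ 2 ∂μ := by
    rw [← integral_sub hi3 hi1]
    exact setIntegral_congr_fun hUm fun x _ => by ring
  rw [hsplit]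
  linarith [mul_nonneg (pow_nonneg hc 3) h2]

variable [μ.IsOpenPosMeasure]

theorem eqOn_zero_of_setIntegral_sq_mul_sub_nonneg (hUo : IsOpen U) (hU : Bornology.IsBounded U)
    (hw : ContinuousOn w (closure U)) (hz : ContinuousOn z (closure U))
    (hwpos : ∀ x ∈ U, 0 < w x) (hzneg : ∀ x ∈ U, z x < 0) (hc : 0 ≤ c)
    (hI : 0 ≤ ∫ x in U, (w x + c * z x) ^ 2 * (c * z x - w x) ∂μ) :
    EqOn (fun x => w x + c * z x) 0 (closure U) := by
  have hf : ContinuousOn (fun x => w x + c * z x) (closure U) := hw.add (hz.const_smul c)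
  have hgap : ∀ x ∈ U, 0 < w x - c * z x := fun x hx => by
    nlinarith [hwpos x hx, mul_nonpos_of_nonneg_of_nonpos hc (hzneg x hx).le]
  have hg : ContinuousOn (fun x => (w x + c * z x) ^ 2 * (w x - c * z x)) (closure U) :=
    (hf.pow 2).mul (hw.sub (hz.const_smul c))
  have hI0 : ∫ x in U, (w x + c * z x) ^ 2 * (w x - c * z x) ∂μ = 0 := by
    refine le_antisymm ?_ (setIntegral_nonneg hUo.measurableSet fun x hx =>
      mul_nonneg (sq_nonneg _) (hgap x hx).le)
    rw [← neg_nonneg, ← integral_neg]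
    simpa only [← mul_neg, neg_sub] using hI
  have hzeroU := eqOn_zero_of_setIntegral_eq_zero hUo (hg.mono subset_closure)
    (hg.integrableOn_of_isBounded hU) (fun x hx => mul_nonneg (sq_nonneg _) (hgap x hx).le) hI0
  refine EqOn.of_subset_closure (fun x hx => ?_) hf continuousOn_const subset_closure le_rfl
  simpa [(hgap x hx).ne'] using hzeroU hx

theorem one_le_mul_of_eqOn_add_mul_zero (hUo : IsOpen U) (hne : U.Nonempty)
    (hU : Bornology.IsBounded U) (hw : ContinuousOn w (closure U)) (hz : ContinuousOn z (closure U))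
    (hwpos : ∀ x ∈ U, 0 < w x) (hzneg : ∀ x ∈ U, z x < 0) (hc : 0 < c)
    (hf : ∀ x ∈ U, w x + c * z x = 0) (h2 : 0 ≤ ∫ x in U, (b * w x + z x) * z x ^ 2 ∂μ) :
    1 ≤ b * c := by
  by_contra! hbc
  have hi : IntegrableOn (fun x => -((b * w x + z x) * z x ^ 2)) U μ :=
    (((hw.const_smul b).add hz).mul (hz.pow 2)).neg.integrableOn_of_isBounded hU
  have hneg : ∀ x ∈ U, 0 < -((b * w x + z x) * z x ^ 2) := fun x hx => by
    have hcz : c * (b * w x + z x) = (b * c - 1) * w x := by linear_combination hf x hx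
    have hbwz : b * w x + z x < 0 := by
      nlinarith [mul_neg_of_neg_of_pos (sub_neg.2 hbc) (hwpos x hx)]
    nlinarith [pow_pos (neg_pos.2 (hzneg x hx)) 2]
  have := setIntegral_pos_of_isOpen hUo hne hi hneg
  rw [integral_neg] at this
  linarith

end Competition

theorem stmt_4_general {n : ℕ} (Ω : Set (Pt n)) (hΩ : IsBoundedDomain Ω)
    (w z : Pt n → ℝ) (hw : ContinuousOn w (closure Ω)) (hz : ContinuousOn z (closure Ω))
    (hwpos : ∀ x ∈ closure Ω, 0 < w x) (hzneg : ∀ x ∈ closure Ω, z x < 0)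
    (b c : ℝ) (hc : 0 < c) (hbc : b * c ≤ 1)
    (h1 : (∫ x in Ω, (w x + c * z x) * w x ^ 2) ≤ 0)
    (h2 : 0 ≤ (∫ x in Ω, (b * w x + z x) * z x ^ 2)) :
    0 ≤ (∫ x in Ω, (w x + c * z x) ^ 2 * (c * z x - w x)) ∧
    b * c = 1 ∧ (∀ x ∈ closure Ω, w x + c * z x = 0) := by
  obtain ⟨hopen, hconn, hbdd⟩ := hΩ
  have hwposΩ : ∀ x ∈ Ω, 0 < w x := fun x hx => hwpos x (subset_closure hx)
  have hznegΩ : ∀ x ∈ Ω, z x < 0 := fun x hx => hzneg x (subset_closure hx)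
  have hI := setIntegral_sq_mul_sub_nonneg hopen.measurableSet hbdd hw hz
    (fun x hx => (hwposΩ x hx).le) hc.le hbc h1 h2
  have hzero := eqOn_zero_of_setIntegral_sq_mul_sub_nonneg hopen hbdd hw hz hwposΩ hznegΩ hc.le hI
  have hbc' := one_le_mul_of_eqOn_add_mul_zero hopen hconn.nonempty hbdd hw hz hwposΩ hznegΩ hc
    (fun x hx => hzero (subset_closure hx)) h2
  exact ⟨hI, le_antisymm hbc hbc', fun x hx => hzero hx⟩

theorem stmt_4 {n : ℕ} (Ω : Set (Pt n)) (hΩ : IsBoundedDomain Ω)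
    (w z : Pt n → ℝ) (hw : ContinuousOn w (closure Ω)) (hz : ContinuousOn z (closure Ω))
    (hwpos : ∀ x ∈ closure Ω, 0 < w x) (hzneg : ∀ x ∈ closure Ω, z x < 0)
    (b c : ℝ) (hb : 0 < b) (hc : 0 < c) (hbc : b * c ≤ 1)
    (h1 : (∫ x in Ω, (w x + c * z x) * w x ^ 2) ≤ 0)
    (h2 : 0 ≤ (∫ x in Ω, (b * w x + z x) * z x ^ 2)) :
    0 ≤ (∫ x in Ω, (w x + c * z x) ^ 2 * (c * z x - w x)) ∧
    b * c = 1 ∧ (∀ x ∈ closure Ω, w x + c * z x = 0) :=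
  stmt_4_general Ω hΩ w z hw hz hwpos hzneg b c hc hbc h1 h2
end
end

section
/- Assume k and p are dispersal kernels, m, M ∈ C(Ω̄) are nonconstant, d, D > 0, and b, c > 0 are constants with bc ≤ 1. If u, v ∈ L^∞(Ω) satisfy u > 0 and v > 0 almost everywhere in Ω and satisfy, for almost every x ∈ Ω, the steady-state equations d(∫_Ω k(x,y)u(y) dy − (∫_Ω k(y,x) dy)u(x)) + u(x)(m(x) − u(x) − c v(x)) = 0 and D(∫_Ω p(x,y)v(y) dy − (∫_Ω p(y,x) dy)v(x)) + v(x)(M(x) − b u(x) − v(x)) = 0, then there exist continuous functions ũ, ṽ ∈ C(Ω̄) such that u = ũ and v = ṽ almost everywhere in Ω. -/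
open MeasureTheory Topology Filter

noncomputable section

/-!
Freezing the nonlocal terms, at each `x` the pair `(u x, v x)` is a positive solution of the
algebraic system `u² + u (α + c v) = F`, `v² + v (β + b u) = G` with coefficients
`α = d ∫ k(y,x) dy - m x`, `β = D ∫ p(y,x) dy - M x`, `F = d ∫ k(x,y) u(y) dy`,
`G = D ∫ p(x,y) v(y) dy`. Integration against a continuous kernel turns bounded functions into
continuous ones, so these coefficients are continuous on `closure Ω`, and `F, G > 0` there
because the kernels are positive on the diagonal. For `bc ≤ 1` the system has exactly one
positive solution, which by compactness depends continuously on `((α, F), (β, G))`;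
composing yields the continuous representatives.
-/

theorem continuousWithinAt_of_isClosed_of_isCompact {X Y : Type*} [TopologicalSpace X]
    [TopologicalSpace Y] {f : X → Y} {s : Set X} {x₀ : X} {R : Set (X × Y)} {K : Set Y}
    (hR : IsClosed R) (hfR : ∀ x ∈ s, (x, f x) ∈ R) (hK : IsCompact K)
    (hfK : ∀ᶠ x in 𝓝[s] x₀, f x ∈ K) (huniq : ∀ y ∈ K, (x₀, y) ∈ R → y = f x₀) :
    ContinuousWithinAt f s x₀ := by
  refine hK.tendsto_nhds_of_unique_mapClusterPt hfK fun y hyK hy => huniq y hyK ?_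
  have hgraph : MapClusterPt (x₀, y) (𝓝[s] x₀) fun x => (x, f x) := by
    rw [((𝓝 x₀).basis_sets.prod_nhds (𝓝 y).basis_sets).mapClusterPt_iff_frequently]
    rintro ⟨U, V⟩ ⟨hU, hV⟩
    exact ((mapClusterPt_iff_frequently.1 hy V hV).and_eventually
      (mem_nhdsWithin_of_mem_nhds hU)).mono fun x hx => ⟨hx.2, hx.1⟩
  exact hR.closure_subset (hgraph.mem_closure_of_mem _ (mem_map.2 (mem_of_superset
    self_mem_nhdsWithin hfR)))

def posRoot (s F : ℝ) : ℝ := (-s + √(s ^ 2 + 4 * F)) / 2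

theorem posRoot_pos (s : ℝ) {F : ℝ} (hF : 0 < F) : 0 < posRoot s F := by
  have : |s| < √(s ^ 2 + 4 * F) := (Real.lt_sqrt (abs_nonneg s)).2 (by rw [sq_abs]; linarith)
  unfold posRoot
  linarith [le_abs_self s]

theorem posRoot_sq_add_mul (s : ℝ) {F : ℝ} (hF : 0 ≤ F) :
    posRoot s F ^ 2 + posRoot s F * s = F := by
  have := Real.sq_sqrt (show 0 ≤ s ^ 2 + 4 * F by positivity)
  unfold posRoot
  linear_combination this / 4

theorem continuous_posRoot (F : ℝ) : Continuous fun s => posRoot s F := by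
  unfold posRoot
  fun_prop

def IsQuadSol (b c : ℝ) (q : (ℝ × ℝ) × (ℝ × ℝ)) (w : ℝ × ℝ) : Prop :=
  w.1 ^ 2 + w.1 * (q.1.1 + c * w.2) = q.1.2 ∧ w.2 ^ 2 + w.2 * (q.2.1 + b * w.1) = q.2.2

namespace IsQuadSol

variable {b c : ℝ} {q : (ℝ × ℝ) × (ℝ × ℝ)} {w : ℝ × ℝ}

theorem exists_pos (hc : 0 ≤ c) (hF : 0 < q.1.2) (hG : 0 < q.2.2) :
    ∃ w, 0 < w.1 ∧ 0 < w.2 ∧ IsQuadSol b c q w := by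
  -- Solve the second equation for `v = V u` and apply the intermediate value theorem to the
  -- first one on `[0, T]`, where `T` solves it for `c = 0`.
  set V := fun t => posRoot (q.2.1 + b * t) q.2.2
  set g := fun t => t ^ 2 + t * (q.1.1 + c * V t) - q.1.2
  set T := posRoot q.1.1 q.1.2
  have hg : Continuous g := by
    have : Continuous V := (continuous_posRoot _).comp (by fun_prop)
    fun_prop
  have hgT : 0 ≤ g T := by
    have := posRoot_sq_add_mul q.1.1 hF.le
    have := mul_nonneg (mul_nonneg hc (posRoot_pos q.1.1 hF).le) (posRoot_pos (q.2.1 + b * T) hG).le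
    simp only [g]
    linarith
  have hg0 : g 0 = -q.1.2 := by simp [g]
  obtain ⟨t, ⟨ht0, -⟩, ht⟩ := intermediate_value_Icc (posRoot_pos _ hF).le hg.continuousOn
    ⟨by linarith, hgT⟩
  refine ⟨(t, V t), ht0.lt_of_ne ?_, posRoot_pos _ hG, ?_, posRoot_sq_add_mul _ hG.le⟩
  · rintro rfl
    linarith
  · simp only [g] at ht
    linarith

-- Cross-multiplying the equations gives `(u₁ - u₂)((u₁u₂ + F)(v₁v₂ + G) - bc u₁u₂v₁v₂) = 0`,
-- and the bracket is positive because `bc ≤ 1`.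
theorem eq_of_pos (hbc : b * c ≤ 1) (hF : 0 < q.1.2) (hG : 0 < q.2.2) {w' : ℝ × ℝ}
    (h₁ : 0 < w.1) (h₂ : 0 < w.2) (h₁' : 0 < w'.1) (h₂' : 0 < w'.2)
    (hw : IsQuadSol b c q w) (hw' : IsQuadSol b c q w') : w = w' := by
  obtain ⟨e₁, e₂⟩ := hw
  obtain ⟨e₁', e₂'⟩ := hw'
  have hu : (w.1 - w'.1) * (w.1 * w'.1 + q.1.2) = c * (w.1 * w'.1) * (w'.2 - w.2) := by
    linear_combination w'.1 * e₁ - w.1 * e₁'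
  have hv : (w.2 - w'.2) * (w.2 * w'.2 + q.2.2) = b * (w.2 * w'.2) * (w'.1 - w.1) := by
    linear_combination w'.2 * e₂ - w.2 * e₂'
  have hpos : 0 < (w.1 * w'.1 + q.1.2) * (w.2 * w'.2 + q.2.2) -
      b * c * (w.1 * w'.1 * (w.2 * w'.2)) := by
    have := mul_pos (mul_pos h₁ h₁') (mul_pos h₂ h₂')
    nlinarith [mul_pos h₁ h₁', mul_pos h₂ h₂']
  have h1 : w.1 = w'.1 := by
    have : (w.1 - w'.1) * ((w.1 * w'.1 + q.1.2) * (w.2 * w'.2 + q.2.2) -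
        b * c * (w.1 * w'.1 * (w.2 * w'.2))) = 0 := by
      linear_combination (w.2 * w'.2 + q.2.2) * hu - c * (w.1 * w'.1) * hv
    linarith [(mul_eq_zero.1 this).resolve_right hpos.ne']
  have h2 : w.2 = w'.2 := by
    rw [h1, sub_self, mul_zero] at hv
    linarith [(mul_eq_zero.1 hv).resolve_right (by positivity)]
  exact Prod.ext h1 h2

theorem fst_pos (hw : IsQuadSol b c q w) (h₁ : 0 ≤ w.1) (hF : 0 < q.1.2) : 0 < w.1 :=
  h₁.lt_of_ne fun h => by have := hw.1; rw [← h] at this; linarith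

theorem snd_pos (hw : IsQuadSol b c q w) (h₂ : 0 ≤ w.2) (hG : 0 < q.2.2) : 0 < w.2 :=
  h₂.lt_of_ne fun h => by have := hw.2; rw [← h] at this; linarith

theorem fst_le (hc : 0 ≤ c) (hw : IsQuadSol b c q w) (h₁ : 0 ≤ w.1) (h₂ : 0 ≤ w.2) :
    w.1 ≤ 1 + 2 * ‖q‖ := by
  have hα : |q.1.1| ≤ ‖q‖ := (norm_fst_le q.1).trans (norm_fst_le q)
  have hF : q.1.2 ≤ ‖q‖ := (le_abs_self _).trans ((norm_snd_le q.1).trans (norm_fst_le q))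
  have := hw.1
  nlinarith [neg_abs_le q.1.1, mul_nonneg (mul_nonneg hc h₁) h₂]

theorem snd_le (hb : 0 ≤ b) (hw : IsQuadSol b c q w) (h₁ : 0 ≤ w.1) (h₂ : 0 ≤ w.2) :
    w.2 ≤ 1 + 2 * ‖q‖ := by
  have hβ : |q.2.1| ≤ ‖q‖ := (norm_fst_le q.2).trans (norm_snd_le q)
  have hG : q.2.2 ≤ ‖q‖ := (le_abs_self _).trans ((norm_snd_le q.2).trans (norm_snd_le q))
  have := hw.2
  nlinarith [neg_abs_le q.2.1, mul_nonneg (mul_nonneg hb h₂) h₁]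

end IsQuadSol

-- A junk value when there is no positive solution, e.g. for `F ≤ 0`.
def quadSol (b c : ℝ) (q : (ℝ × ℝ) × (ℝ × ℝ)) : ℝ × ℝ :=
  Classical.epsilon fun w => 0 < w.1 ∧ 0 < w.2 ∧ IsQuadSol b c q w

section quadSol

variable {b c : ℝ} {q : (ℝ × ℝ) × (ℝ × ℝ)}

theorem quadSol_spec (hc : 0 ≤ c) (hF : 0 < q.1.2) (hG : 0 < q.2.2) :
    0 < (quadSol b c q).1 ∧ 0 < (quadSol b c q).2 ∧ IsQuadSol b c q (quadSol b c q) :=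
  Classical.epsilon_spec (IsQuadSol.exists_pos hc hF hG)

theorem IsQuadSol.eq_quadSol (hc : 0 ≤ c) (hbc : b * c ≤ 1) (hF : 0 < q.1.2)
    (hG : 0 < q.2.2) {w : ℝ × ℝ} (h₁ : 0 < w.1) (h₂ : 0 < w.2) (hw : IsQuadSol b c q w) :
    w = quadSol b c q :=
  let ⟨h₁', h₂', hw'⟩ := quadSol_spec hc hF hG
  hw.eq_of_pos hbc hF hG h₁ h₂ h₁' h₂' hw'

theorem continuousOn_quadSol (hb : 0 ≤ b) (hc : 0 ≤ c) (hbc : b * c ≤ 1) :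
    ContinuousOn (quadSol b c) {q | 0 < q.1.2 ∧ 0 < q.2.2} := by
  intro q₀ ⟨hF₀, hG₀⟩
  set B := 3 + 2 * ‖q₀‖
  refine continuousWithinAt_of_isClosed_of_isCompact
    (R := {p | IsQuadSol b c p.1 p.2 ∧ 0 ≤ p.2.1 ∧ 0 ≤ p.2.2}) (K := Set.Icc 0 (B, B))
    ?_ ?_ isCompact_Icc ?_ ?_
  · simp only [IsQuadSol, Set.ofPred_and]
    exact ((isClosed_eq (by fun_prop) (by fun_prop)).inter (isClosed_eq (by fun_prop)
      (by fun_prop))).inter ((isClosed_le (by fun_prop) (by fun_prop)).inter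
      (isClosed_le (by fun_prop) (by fun_prop)))
  · rintro q ⟨hF, hG⟩
    obtain ⟨h₁, h₂, hq⟩ := quadSol_spec (b := b) hc hF hG
    exact ⟨hq, h₁.le, h₂.le⟩
  · have hnear : ∀ᶠ q in 𝓝 q₀, ‖q‖ < ‖q₀‖ + 1 :=
      continuous_norm.continuousAt.eventually (gt_mem_nhds (lt_add_one _))
    filter_upwards [self_mem_nhdsWithin, nhdsWithin_le_nhds hnear] with q ⟨hF, hG⟩ hq
    obtain ⟨h₁, h₂, hsol⟩ := quadSol_spec (b := b) hc hF hG
    have := hsol.fst_le hc h₁.le h₂.le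
    have := hsol.snd_le hb h₁.le h₂.le
    exact ⟨⟨h₁.le, h₂.le⟩, by linarith, by linarith⟩
  · rintro w - ⟨hw, h₁, h₂⟩
    exact hw.eq_quadSol hc hbc hF₀ hG₀ (hw.fst_pos h₁ hF₀) (hw.snd_pos h₂ hG₀)

end quadSol

section KernelIntegral

variable {X : Type*} [MetricSpace X] [ProperSpace X] [MeasurableSpace X] [BorelSpace X]
  {μ : Measure X} {Ω : Set X} {w : X → ℝ}

theorem MeasureTheory.IntegrableOn.continuous_mul_of_isBounded {g : X → ℝ} (hΩm : MeasurableSet Ω)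
    (hΩb : Bornology.IsBounded Ω) (hg : Continuous g) (hw : IntegrableOn w Ω μ) :
    IntegrableOn (fun y => g y * w y) Ω μ := by
  obtain ⟨C, hC⟩ := hΩb.isCompact_closure.exists_bound_of_continuousOn hg.continuousOn
  refine Integrable.bdd_mul (c := C) hw hg.aestronglyMeasurable ?_
  filter_upwards [ae_restrict_mem hΩm] with y hy using hC y (subset_closure hy)

theorem continuous_setIntegral_kernel_mul {k : X → X → ℝ} (hΩm : MeasurableSet Ω)
    (hΩb : Bornology.IsBounded Ω) (hk : Continuous (Function.uncurry k))
    (hw : IntegrableOn w Ω μ) : Continuous fun x => ∫ y in Ω, k x y * w y ∂μ := by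
  refine continuous_iff_continuousAt.2 fun x₀ => ?_
  obtain ⟨C, hC⟩ := ((isCompact_closedBall x₀ 1).prod
    hΩb.isCompact_closure).exists_bound_of_continuousOn hk.continuousOn
  refine continuousAt_of_dominated (bound := fun y => C * ‖w y‖)
    (Eventually.of_forall fun x =>
      (hk.comp (continuous_const.prodMk continuous_id)).aestronglyMeasurable.mul hw.1)
    ?_ (hw.norm.const_mul C)
    (Eventually.of_forall fun y =>
      (hk.comp (continuous_id.prodMk continuous_const)).continuousAt.mul continuousAt_const)
  filter_upwards [Metric.closedBall_mem_nhds x₀ one_pos] with x hx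
  filter_upwards [ae_restrict_mem hΩm] with y hy
  rw [norm_mul]
  exact mul_le_mul_of_nonneg_right (hC (x, y) ⟨hx, subset_closure hy⟩) (norm_nonneg _)

theorem continuous_setIntegral_swap [IsFiniteMeasureOnCompacts μ] {k : X → X → ℝ}
    (hΩm : MeasurableSet Ω) (hΩb : Bornology.IsBounded Ω) (hk : Continuous (Function.uncurry k)) :
    Continuous fun x => ∫ y in Ω, k y x ∂μ := by
  simpa using continuous_setIntegral_kernel_mul (k := fun x y => k y x) hΩm hΩb
    (hk.comp continuous_swap) (integrableOn_const (C := (1 : ℝ)) hΩb.measure_lt_top.ne)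

theorem setIntegral_mul_pos [μ.IsOpenPosMeasure] {g : X → ℝ} (hΩo : IsOpen Ω)
    (hΩb : Bornology.IsBounded Ω) (hg : Continuous g) (hg0 : ∀ y, 0 ≤ g y) {x₀ : X}
    (hx₀ : x₀ ∈ closure Ω) (hgx₀ : 0 < g x₀) (hw : IntegrableOn w Ω μ)
    (hwpos : ∀ᵐ y ∂μ.restrict Ω, 0 < w y) : 0 < ∫ y in Ω, g y * w y ∂μ := by
  have hnonneg : 0 ≤ᵐ[μ.restrict Ω] fun y => g y * w y := by
    filter_upwards [hwpos] with y hy using mul_nonneg (hg0 y) hy.le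
  rw [setIntegral_pos_iff_support_of_nonneg_ae hnonneg
    (hw.continuous_mul_of_isBounded hΩo.measurableSet hΩb hg)]
  have hS : 0 < μ ({y | 0 < g y} ∩ Ω) :=
    ((isOpen_lt continuous_const hg).inter hΩo).measure_pos μ
      (mem_closure_iff.1 hx₀ _ (isOpen_lt continuous_const hg) hgx₀)
  refine hS.trans_le (measure_mono_ae ?_)
  filter_upwards [(ae_restrict_iff' hΩo.measurableSet).1 hwpos] with y hy ⟨hgy, hyΩ⟩
  exact ⟨(mul_pos hgy (hy hyΩ)).ne', hyΩ⟩

def quadCoeff (μ : Measure X) (Ω : Set X) (k : X → X → ℝ) (d : ℝ) (m w : X → ℝ) (x : X) :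
    ℝ × ℝ :=
  (d * (∫ y in Ω, k y x ∂μ) - m x, d * ∫ y in Ω, k x y * w y ∂μ)

theorem continuousOn_quadCoeff [IsFiniteMeasureOnCompacts μ] {k : X → X → ℝ} {d : ℝ}
    {m : X → ℝ} (hΩm : MeasurableSet Ω) (hΩb : Bornology.IsBounded Ω)
    (hk : Continuous (Function.uncurry k)) (hm : ContinuousOn m (closure Ω))
    (hw : IntegrableOn w Ω μ) : ContinuousOn (quadCoeff μ Ω k d m w) (closure Ω) :=
  (((continuous_setIntegral_swap hΩm hΩb hk).const_mul d).continuousOn.sub hm).prodMk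
    ((continuous_setIntegral_kernel_mul hΩm hΩb hk hw).const_mul d).continuousOn

theorem quadCoeff_snd_pos [μ.IsOpenPosMeasure] {k : X → X → ℝ} {d : ℝ} {m : X → ℝ}
    (hΩo : IsOpen Ω) (hΩb : Bornology.IsBounded Ω) (hk : Continuous (Function.uncurry k))
    (hk0 : ∀ x y, 0 ≤ k x y) (hkd : ∀ x, 0 < k x x) (hd : 0 < d) {x : X}
    (hx : x ∈ closure Ω) (hw : IntegrableOn w Ω μ) (hwpos : ∀ᵐ y ∂μ.restrict Ω, 0 < w y) :
    0 < (quadCoeff μ Ω k d m w x).2 :=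
  mul_pos hd (setIntegral_mul_pos hΩo hΩb (hk.comp (Continuous.prodMk_right x)) (hk0 x) hx
    (hkd x) hw hwpos)

end KernelIntegral

theorem stmt_8_general {n : ℕ} (Ω : Set (Pt n)) (hΩ : IsBoundedDomain Ω)
    (k p : Pt n → Pt n → ℝ)
    (hk : IsDispersalKernel k) (hp : IsDispersalKernel p)
    (m M : Pt n → ℝ)
    (hm : ContinuousOn m (closure Ω)) (hM : ContinuousOn M (closure Ω))
    (d D b c : ℝ) (hd : 0 < d) (hD : 0 < D) (hb : 0 < b) (hc : 0 < c)
    (hbc : b * c ≤ 1)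
    (u v : Pt n → ℝ)
    (hu : MemLp u ⊤ (volume.restrict Ω)) (hv : MemLp v ⊤ (volume.restrict Ω))
    (hupos : ∀ᵐ x ∂(volume.restrict Ω), 0 < u x)
    (hvpos : ∀ᵐ x ∂(volume.restrict Ω), 0 < v x)
    (hueq : ∀ᵐ x ∂(volume.restrict Ω),
      d * ((∫ y in Ω, k x y * u y) - (∫ y in Ω, k y x) * u x) +
        u x * (m x - u x - c * v x) = 0)
    (hveq : ∀ᵐ x ∂(volume.restrict Ω),
      D * ((∫ y in Ω, p x y * v y) - (∫ y in Ω, p y x) * v x) +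
        v x * (M x - b * u x - v x) = 0) :
    ∃ ut vt : Pt n → ℝ, ContinuousOn ut (closure Ω) ∧ ContinuousOn vt (closure Ω) ∧
      u =ᵐ[volume.restrict Ω] ut ∧ v =ᵐ[volume.restrict Ω] vt := by
  obtain ⟨hΩo, -, hΩb⟩ := hΩ
  obtain ⟨hkc, hk0, hkd, -, -⟩ := hk
  obtain ⟨hpc, hp0, hpd, -, -⟩ := hp
  have : IsFiniteMeasure (volume.restrict Ω) :=
    isFiniteMeasure_restrict.2 hΩb.measure_lt_top.ne
  have hui : IntegrableOn u Ω := hu.integrable le_top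
  have hvi : IntegrableOn v Ω := hv.integrable le_top
  set Q := fun x => (quadCoeff volume Ω k d m u x, quadCoeff volume Ω p D M v x)
  have hQ : ContinuousOn Q (closure Ω) :=
    (continuousOn_quadCoeff hΩo.measurableSet hΩb hkc hm hui).prodMk
      (continuousOn_quadCoeff hΩo.measurableSet hΩb hpc hM hvi)
  have hQpos : Set.MapsTo Q (closure Ω) {q | 0 < q.1.2 ∧ 0 < q.2.2} := fun x hx =>
    ⟨quadCoeff_snd_pos hΩo hΩb hkc hk0 hkd hd hx hui hupos,
      quadCoeff_snd_pos hΩo hΩb hpc hp0 hpd hD hx hvi hvpos⟩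
  have hsol : ContinuousOn (fun x => quadSol b c (Q x)) (closure Ω) :=
    (continuousOn_quadSol hb.le hc.le hbc).comp hQ hQpos
  have hae : ∀ᵐ x ∂(volume.restrict Ω), (u x, v x) = quadSol b c (Q x) := by
    filter_upwards [hueq, hveq, hupos, hvpos, ae_restrict_mem hΩo.measurableSet]
      with x hux hvx hu₀ hv₀ hx
    obtain ⟨hF, hG⟩ := hQpos (subset_closure hx)
    refine IsQuadSol.eq_quadSol hc.le hbc hF hG hu₀ hv₀ ⟨?_, ?_⟩
    · simp only [Q, quadCoeff]
      linear_combination -hux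
    · simp only [Q, quadCoeff]
      linear_combination -hvx
  exact ⟨_, _, hsol.fst, hsol.snd, hae.mono fun x hx => congrArg Prod.fst hx,
    hae.mono fun x hx => congrArg Prod.snd hx⟩

theorem stmt_8 {n : ℕ} (Ω : Set (Pt n)) (hΩ : IsBoundedDomain Ω)
    (k p : Pt n → Pt n → ℝ)
    (hk : IsDispersalKernel k) (hp : IsDispersalKernel p)
    (m M : Pt n → ℝ)
    (hm : ContinuousOn m (closure Ω)) (hM : ContinuousOn M (closure Ω))
    (hmnc : Nonconstant Ω m) (hMnc : Nonconstant Ω M)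
    (d D b c : ℝ) (hd : 0 < d) (hD : 0 < D) (hb : 0 < b) (hc : 0 < c)
    (hbc : b * c ≤ 1)
    (u v : Pt n → ℝ)
    (hu : MemLp u ⊤ (volume.restrict Ω)) (hv : MemLp v ⊤ (volume.restrict Ω))
    (hupos : ∀ᵐ x ∂(volume.restrict Ω), 0 < u x)
    (hvpos : ∀ᵐ x ∂(volume.restrict Ω), 0 < v x)
    (hueq : ∀ᵐ x ∂(volume.restrict Ω),
      d * ((∫ y in Ω, k x y * u y) - (∫ y in Ω, k y x) * u x) +
        u x * (m x - u x - c * v x) = 0)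
    (hveq : ∀ᵐ x ∂(volume.restrict Ω),
      D * ((∫ y in Ω, p x y * v y) - (∫ y in Ω, p y x) * v x) +
        v x * (M x - b * u x - v x) = 0) :
    ∃ ut vt : Pt n → ℝ, ContinuousOn ut (closure Ω) ∧ ContinuousOn vt (closure Ω) ∧
      u =ᵐ[volume.restrict Ω] ut ∧ v =ᵐ[volume.restrict Ω] vt :=
  stmt_8_general Ω hΩ k p hk hp m M hm hM d D b c hd hD hb hc hbc u v hu hv hupos hvpos hueq hveq
end
end

section
/- Let Ω be a nonempty bounded domain in ℝⁿ and let r > 0, δ > 0. Suppose u : Ω × [0,∞) → ℝ is nonnegative, u(·,t) ∈ L^∞(Ω) is measurable for each t ≥ 0, and for every x ∈ Ω the map t ↦ u(x,t) is differentiable with ∂u/∂t(x,t) ≥ δ ∫_{Ω ∩ B_r(x)} u(y,t) dy for all t ≥ 0, where B_r(x) is the open ball of radius r centered at x. Then there exist constants α > 0 and A₀ > 0 (depending only on Ω, r, δ) such that for every t₀ ≥ 0, every t ∈ (0,1), and every x ∈ Ω, u(x, t₀ + t) ≥ A₀ t^α ∫_Ω u(y, t₀) dy. -/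
open MeasureTheory Topology Filter

noncomputable section

/-! Integrating the differential inequality in time (after first deducing that `u(x, ·)` is
nondecreasing) shows that the mass of `u(·, t₀)` in `B(y, r/4)` forces
`u ≥ δ t ∫_{B(y, r/4)} u(·, t₀)` on `B(x, r/4)` as soon as `dist x y ≤ r/2`. Lower bounds of the
shape `c t^k ∫_{B(y, r/4)} u(·, t₀)` compose: split the time at `t/2` and integrate the
intermediate bound over `Ω ∩ B(y, r/4)`, a set of positive measure. As `Ω` is connected, such a
bound therefore links any two points of `Ω`; over a finite `r/4`-net the constants can be chosen
uniformly, and summing over the net bounds `∫_Ω u(·, t₀)`. -/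

open Metric Set Finset

lemma mul_sub_le_sub_of_hasDerivWithinAt_Ici {f : ℝ → ℝ} {a C : ℝ}
    (hf : ∀ s, a ≤ s → ∃ f', HasDerivWithinAt f f' (Ici a) s ∧ C ≤ f') {s t : ℝ}
    (hs : a ≤ s) (hst : s ≤ t) : C * (t - s) ≤ f t - f s := by
  have hcont : ContinuousOn f (Ici a) := fun s hs ↦
    let ⟨_, hf', _⟩ := hf s hs
    hf'.continuousWithinAt
  have hderiv : ∀ s ∈ Ioi a, ∃ f', HasDerivAt f f' s ∧ C ≤ f' := fun s hs ↦
    let ⟨f', hf', hC⟩ := hf s hs.le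
    ⟨f', hf'.hasDerivAt (Ici_mem_nhds hs), hC⟩
  refine (convex_Ici a).mul_sub_le_image_sub_of_le_deriv hcont ?_ ?_ s hs t (hs.trans hst) hst
  · rw [interior_Ici]
    intro s hs
    obtain ⟨f', hf', -⟩ := hderiv s hs
    exact hf'.differentiableAt.differentiableWithinAt
  · rw [interior_Ici]
    intro s hs
    obtain ⟨f', hf', hC⟩ := hderiv s hs
    rwa [hf'.deriv]

lemma setIntegral_le_sum_setIntegral_inter {α ι : Type*} [MeasurableSpace α] {μ : Measure α}
    {s : Set α} {f : α → ℝ} {T : Finset ι} {B : ι → Set α} (hs : MeasurableSet s)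
    (hB : ∀ i ∈ T, MeasurableSet (B i)) (hf : IntegrableOn f s μ) (hf₀ : ∀ x ∈ s, 0 ≤ f x)
    (hcover : s ⊆ ⋃ i ∈ T, B i) :
    ∫ x in s, f x ∂μ ≤ ∑ i ∈ T, ∫ x in s ∩ B i, f x ∂μ := by
  have hind : ∀ i ∈ T, IntegrableOn ((B i).indicator f) s μ := fun i hi ↦
    hf.indicator (hB i hi)
  calc ∫ x in s, f x ∂μ ≤ ∫ x in s, ∑ i ∈ T, (B i).indicator f x ∂μ := by
        refine setIntegral_mono_on hf (integrable_finsetSum T hind) hs fun x hx ↦ ?_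
        obtain ⟨i, hi, hxi⟩ := mem_iUnion₂.1 (hcover hx)
        calc f x = (B i).indicator f x := (indicator_of_mem hxi f).symm
          _ ≤ ∑ j ∈ T, (B j).indicator f x :=
            single_le_sum (fun j _ ↦ indicator_apply_nonneg fun _ ↦ hf₀ x hx) hi
    _ = ∑ i ∈ T, ∫ x in s ∩ B i, f x ∂μ := by
        rw [integral_finsetSum T hind]
        exact sum_congr rfl fun i hi ↦ setIntegral_indicator (hB i hi)

section

variable {X : Type*} [PseudoMetricSpace X] [MeasurableSpace X] [OpensMeasurableSpace X]
  {μ : Measure X} {Ω : Set X} {r δ ρ : ℝ} {u : X → ℝ → ℝ}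

structure NonlocalSupersolution (μ : Measure X) (Ω : Set X) (r δ : ℝ) (u : X → ℝ → ℝ) :
    Prop where
  nonneg : ∀ x ∈ Ω, ∀ t, 0 ≤ t → 0 ≤ u x t
  integrableOn : ∀ t, 0 ≤ t → IntegrableOn (fun x ↦ u x t) Ω μ
  hasDerivWithinAt : ∀ x ∈ Ω, ∀ t, 0 ≤ t →
    ∃ u', HasDerivWithinAt (u x) u' (Ici 0) t ∧ δ * ∫ y in Ω ∩ ball x r, u y t ∂μ ≤ u'

lemma NonlocalSupersolution.monotoneOn (hu : NonlocalSupersolution μ Ω r δ u)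
    (hΩ : MeasurableSet Ω) (hδ : 0 ≤ δ) {x : X} (hx : x ∈ Ω) : MonotoneOn (u x) (Ici 0) := by
  intro s hs t _ hst
  have hgrowth := mul_sub_le_sub_of_hasDerivWithinAt_Ici (f := u x) (C := 0)
    (fun s hs ↦ ?_) hs hst
  · linarith
  obtain ⟨u', hu', hle⟩ := hu.hasDerivWithinAt x hx s hs
  exact ⟨u', hu', (mul_nonneg hδ (setIntegral_nonneg (hΩ.inter measurableSet_ball)
    fun y hy ↦ hu.nonneg y hy.1 s hs)).trans hle⟩

lemma NonlocalSupersolution.mul_setIntegral_mul_le (hu : NonlocalSupersolution μ Ω r δ u)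
    (hΩ : MeasurableSet Ω) (hδ : 0 ≤ δ) {x : X} (hx : x ∈ Ω) {s t : ℝ} (hs : 0 ≤ s)
    (ht : 0 ≤ t) : δ * (∫ y in Ω ∩ ball x r, u y s ∂μ) * t ≤ u x (s + t) := by
  have hgrowth := mul_sub_le_sub_of_hasDerivWithinAt_Ici (f := u x) (a := s)
    (C := δ * ∫ y in Ω ∩ ball x r, u y s ∂μ) (fun s' hs' ↦ ?_) le_rfl (le_add_of_nonneg_right ht)
  · rw [add_sub_cancel_left] at hgrowth
    linarith [hu.nonneg x hx s hs]
  obtain ⟨u', hu', hle⟩ := hu.hasDerivWithinAt x hx s' (hs.trans hs')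
  refine ⟨u', hu'.mono (Ici_subset_Ici.2 hs), le_trans (mul_le_mul_of_nonneg_left ?_ hδ) hle⟩
  exact setIntegral_mono_on ((hu.integrableOn s hs).mono_set inter_subset_left)
    ((hu.integrableOn s' (hs.trans hs')).mono_set inter_subset_left)
    (hΩ.inter measurableSet_ball)
    fun y hy ↦ hu.monotoneOn hΩ hδ hy.1 hs (hs.trans hs') hs'

def SpreadBound (μ : Measure X) (Ω : Set X) (ρ : ℝ) (u : X → ℝ → ℝ) (c : ℝ) (k : ℕ)
    (x y : X) : Prop :=
  ∀ t₀, 0 ≤ t₀ → ∀ t, 0 < t → t < 1 → ∀ z ∈ Ω ∩ ball x ρ,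
    c * t ^ k * ∫ w in Ω ∩ ball y ρ, u w t₀ ∂μ ≤ u z (t₀ + t)

def Spreads (μ : Measure X) (Ω : Set X) (ρ : ℝ) (u : X → ℝ → ℝ) (x y : X) : Prop :=
  ∃ c > 0, ∃ k : ℕ, SpreadBound μ Ω ρ u c k x y

lemma SpreadBound.mono {c c' : ℝ} {k k' : ℕ} {x y : X} (h : SpreadBound μ Ω ρ u c k x y)
    (hΩ : MeasurableSet Ω) (hu₀ : ∀ x ∈ Ω, ∀ t, 0 ≤ t → 0 ≤ u x t) (hc' : 0 ≤ c')
    (hc : c' ≤ c) (hk : k ≤ k') : SpreadBound μ Ω ρ u c' k' x y := by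
  intro t₀ ht₀ t ht ht1 z hz
  refine le_trans ?_ (h t₀ ht₀ t ht ht1 z hz)
  have hI : 0 ≤ ∫ w in Ω ∩ ball y ρ, u w t₀ ∂μ :=
    setIntegral_nonneg (hΩ.inter measurableSet_ball) fun w hw ↦ hu₀ w hw.1 t₀ ht₀
  have hpow : t ^ k' ≤ t ^ k := pow_le_pow_of_le_one ht.le ht1.le hk
  gcongr
  exact hc'.trans hc

lemma NonlocalSupersolution.spreadBound_of_dist_le (hu : NonlocalSupersolution μ Ω r δ u)
    (hΩ : MeasurableSet Ω) (hδ : 0 ≤ δ) {x y : X} (hxy : dist x y + 2 * ρ ≤ r) :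
    SpreadBound μ Ω ρ u δ 1 x y := by
  intro t₀ ht₀ t ht _ z hz
  have hsub : Ω ∩ ball y ρ ⊆ Ω ∩ ball z r := fun w hw ↦ by
    refine ⟨hw.1, mem_ball.2 ?_⟩
    have := dist_triangle4 w y x z
    rw [dist_comm y x, dist_comm x z] at this
    linarith [mem_ball.1 hw.2, mem_ball.1 hz.2]
  calc δ * t ^ 1 * ∫ w in Ω ∩ ball y ρ, u w t₀ ∂μ
      ≤ δ * (∫ w in Ω ∩ ball z r, u w t₀ ∂μ) * t := by
        rw [pow_one, mul_right_comm]
        refine mul_le_mul_of_nonneg_right (mul_le_mul_of_nonneg_left ?_ hδ) ht.le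
        exact setIntegral_mono_set ((hu.integrableOn t₀ ht₀).mono_set inter_subset_left)
          ((ae_restrict_iff' (hΩ.inter measurableSet_ball)).2
            (ae_of_all _ fun w hw ↦ hu.nonneg w hw.1 t₀ ht₀))
          hsub.eventuallyLE
    _ ≤ u z (t₀ + t) := hu.mul_setIntegral_mul_le hΩ hδ hz.1 ht₀ ht.le

lemma SpreadBound.trans {c c' : ℝ} {k k' : ℕ} {x y w : X} (hxy : SpreadBound μ Ω ρ u c k x y)
    (hyw : SpreadBound μ Ω ρ u c' k' y w) (hΩ : MeasurableSet Ω)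
    (hint : ∀ t, 0 ≤ t → IntegrableOn (fun x ↦ u x t) Ω μ) (hfin : μ (Ω ∩ ball y ρ) ≠ ⊤)
    (hc : 0 ≤ c) :
    SpreadBound μ Ω ρ u (c * c' * μ.real (Ω ∩ ball y ρ) / 2 ^ (k + k')) (k + k') x w := by
  intro t₀ ht₀ t ht ht1 z hz
  set I := ∫ v in Ω ∩ ball w ρ, u v t₀ ∂μ
  have hmid : c' * (t / 2) ^ k' * I * μ.real (Ω ∩ ball y ρ)
      ≤ ∫ v in Ω ∩ ball y ρ, u v (t₀ + t / 2) ∂μ :=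
    setIntegral_ge_of_const_le_real (hΩ.inter measurableSet_ball) hfin
      (fun v hv ↦ hyw t₀ ht₀ (t / 2) (by positivity) (by linarith) v hv)
      ((hint _ (by positivity)).mono_set inter_subset_left)
  have hlast := hxy (t₀ + t / 2) (by positivity) (t / 2) (by positivity) (by linarith) z hz
  rw [add_assoc, add_halves] at hlast
  calc c * c' * μ.real (Ω ∩ ball y ρ) / 2 ^ (k + k') * t ^ (k + k') * I
      = c * (t / 2) ^ k * (c' * (t / 2) ^ k' * I * μ.real (Ω ∩ ball y ρ)) := by
        rw [div_pow, div_pow, pow_add, pow_add]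
        field_simp
    _ ≤ c * (t / 2) ^ k * ∫ v in Ω ∩ ball y ρ, u v (t₀ + t / 2) ∂μ := by gcongr
    _ ≤ u z (t₀ + t) := hlast

lemma Spreads.trans {x y w : X} (hxy : Spreads μ Ω ρ u x y) (hyw : Spreads μ Ω ρ u y w)
    (hΩ : MeasurableSet Ω) (hint : ∀ t, 0 ≤ t → IntegrableOn (fun x ↦ u x t) Ω μ)
    (hpos : 0 < μ (Ω ∩ ball y ρ)) (hfin : μ (Ω ∩ ball y ρ) ≠ ⊤) : Spreads μ Ω ρ u x w := by
  obtain ⟨c, hc, k, hck⟩ := hxy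
  obtain ⟨c', hc', k', hck'⟩ := hyw
  have hreal : 0 < μ.real (Ω ∩ ball y ρ) := ENNReal.toReal_pos hpos.ne' hfin
  exact ⟨_, by positivity, _, hck.trans hck' hΩ hint hfin hc.le⟩

lemma NonlocalSupersolution.spreads [μ.IsOpenPosMeasure] (hu : NonlocalSupersolution μ Ω r δ u)
    (hΩo : IsOpen Ω) (hΩc : IsPreconnected Ω) (hΩfin : μ Ω ≠ ⊤) (hδ : 0 < δ) (hρ : 0 < ρ)
    (hρr : 2 * ρ < r) {x y : X} (hx : x ∈ Ω) (hy : y ∈ Ω) : Spreads μ Ω ρ u x y := by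
  have hΩ := hΩo.measurableSet
  refine hΩc.induction₂' _ (fun x _ ↦ ?_) (fun x y w _ hy _ hxy hyw ↦ ?_) hx hy
  · filter_upwards [nhdsWithin_le_nhds (ball_mem_nhds x (sub_pos.2 hρr))] with y hy
    rw [mem_ball'] at hy
    exact ⟨⟨δ, hδ, 1, hu.spreadBound_of_dist_le hΩ hδ.le (by linarith)⟩,
      ⟨δ, hδ, 1, hu.spreadBound_of_dist_le hΩ hδ.le (by rw [dist_comm]; linarith)⟩⟩
  · exact hxy.trans hyw hΩ hu.integrableOn
      ((hΩo.inter isOpen_ball).measure_pos μ ⟨y, hy, mem_ball_self hρ⟩)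
      (measure_mono inter_subset_left |>.trans_lt hΩfin.lt_top).ne

lemma Spreads.eventually_spreadBound {x y : X} (h : Spreads μ Ω ρ u x y) (hΩ : MeasurableSet Ω)
    (hu₀ : ∀ x ∈ Ω, ∀ t, 0 ≤ t → 0 ≤ u x t) :
    ∀ᶠ p : ℕ × ℝ in atTop ×ˢ 𝓝[>] 0, SpreadBound μ Ω ρ u p.2 p.1 x y := by
  obtain ⟨c, hc, k, hck⟩ := h
  filter_upwards [prod_mem_prod (Ici_mem_atTop k) (Ioc_mem_nhdsGT hc)] with p ⟨hk, hc'⟩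
  exact hck.mono hΩ hu₀ hc'.1.le hc'.2 hk

lemma exists_spreadBound_of_forall_spreads {T : Finset X} (hΩ : MeasurableSet Ω)
    (hu₀ : ∀ x ∈ Ω, ∀ t, 0 ≤ t → 0 ≤ u x t) (h : ∀ x ∈ T, ∀ y ∈ T, Spreads μ Ω ρ u x y) :
    ∃ k : ℕ, 0 < k ∧ ∃ c > 0, ∀ x ∈ T, ∀ y ∈ T, SpreadBound μ Ω ρ u c k x y := by
  have hev : ∀ᶠ p : ℕ × ℝ in atTop ×ˢ 𝓝[>] 0,
      ∀ x ∈ T, ∀ y ∈ T, SpreadBound μ Ω ρ u p.2 p.1 x y := by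
    simp only [eventually_all_finset]
    exact fun x hx y hy ↦ (h x hx y hy).eventually_spreadBound hΩ hu₀
  have hpos : ∀ᶠ p : ℕ × ℝ in atTop ×ˢ 𝓝[>] 0, 0 < p.1 ∧ 0 < p.2 :=
    prod_mem_prod (Ioi_mem_atTop 0) self_mem_nhdsWithin
  obtain ⟨⟨k, c⟩, ⟨hk, hc⟩, hkc⟩ := (hpos.and hev).exists
  exact ⟨k, hk, c, hc, hkc⟩

theorem NonlocalSupersolution.exists_pow_mul_setIntegral_le [μ.IsOpenPosMeasure]
    (hu : NonlocalSupersolution μ Ω r δ u) (hΩo : IsOpen Ω) (hΩc : IsConnected Ω)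
    (hΩb : TotallyBounded Ω) (hΩfin : μ Ω ≠ ⊤) (hr : 0 < r) (hδ : 0 < δ) :
    ∃ k : ℕ, 0 < k ∧ ∃ A > 0, ∀ t₀, 0 ≤ t₀ → ∀ t, 0 < t → t < 1 → ∀ x ∈ Ω,
      A * t ^ k * ∫ y in Ω, u y t₀ ∂μ ≤ u x (t₀ + t) := by
  have hΩ := hΩo.measurableSet
  obtain ⟨T, hTΩ, hTfin, hcover⟩ := finite_approx_of_totallyBounded hΩb (r / 4) (by positivity)
  lift T to Finset X using hTfin
  obtain ⟨k, hk, c, hc, hbound⟩ := exists_spreadBound_of_forall_spreads hΩ hu.nonneg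
    fun x hx y hy ↦ hu.spreads (ρ := r / 4) hΩo hΩc.isPreconnected hΩfin hδ (by positivity) (by linarith)
      (hTΩ hx) (hTΩ hy)
  have hT : (0 : ℝ) < #T := by
    obtain ⟨x, hx⟩ := hΩc.nonempty
    obtain ⟨y, hy, -⟩ := mem_iUnion₂.1 (hcover hx)
    exact Nat.cast_pos.2 (card_pos.2 ⟨y, hy⟩)
  refine ⟨k, hk, c / #T, by positivity, fun t₀ ht₀ t ht ht1 x hx ↦ ?_⟩
  obtain ⟨y, hy, hxy⟩ := mem_iUnion₂.1 (hcover hx)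
  have hsum := setIntegral_le_sum_setIntegral_inter hΩ (fun _ _ ↦ measurableSet_ball)
    (hu.integrableOn t₀ ht₀) (fun z hz ↦ hu.nonneg z hz t₀ ht₀) hcover
  calc c / #T * t ^ k * ∫ y in Ω, u y t₀ ∂μ
      = (c * t ^ k * ∫ y in Ω, u y t₀ ∂μ) / #T := by ring
    _ ≤ (∑ w ∈ T, c * t ^ k * ∫ z in Ω ∩ ball w (r / 4), u z t₀ ∂μ) / #T := by
        rw [← mul_sum]
        gcongr
    _ ≤ (∑ w ∈ T, u x (t₀ + t)) / #T := by
        gcongr with w hw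
        exact hbound y hy w hw t₀ ht₀ t ht ht1 x ⟨hx, hxy⟩
    _ = u x (t₀ + t) := by
        rw [sum_const, nsmul_eq_mul]
        field_simp

end

theorem stmt_9 {n : ℕ} (Ω : Set (Pt n)) (hΩ : IsBoundedDomain Ω)
    (r δ : ℝ) (hr : 0 < r) (hδ : 0 < δ)
    (u : Pt n → ℝ → ℝ)
    (hnn : ∀ x ∈ Ω, ∀ t : ℝ, 0 ≤ t → 0 ≤ u x t)
    (hLinf : ∀ t : ℝ, 0 ≤ t → MemLp (fun x => u x t) ⊤ (volume.restrict Ω))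
    (hderiv : ∀ x ∈ Ω, ∀ t : ℝ, 0 ≤ t →
      ∃ u' : ℝ, HasDerivWithinAt (u x) u' (Set.Ici 0) t ∧
        δ * (∫ y in Ω ∩ Metric.ball x r, u y t) ≤ u') :
    ∃ α : ℝ, 0 < α ∧ ∃ A₀ : ℝ, 0 < A₀ ∧
      ∀ t₀ : ℝ, 0 ≤ t₀ → ∀ t : ℝ, 0 < t → t < 1 → ∀ x ∈ Ω,
        A₀ * t ^ α * (∫ y in Ω, u y t₀) ≤ u x (t₀ + t) := by
  obtain ⟨hopen, hconn, hbdd⟩ := hΩ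
  have : IsFiniteMeasure (volume.restrict Ω) := isFiniteMeasure_restrict.2 hbdd.measure_lt_top.ne
  have hu : NonlocalSupersolution volume Ω r δ u :=
    ⟨hnn, fun t ht ↦ (hLinf t ht).integrable le_top, hderiv⟩
  obtain ⟨k, hk, A, hA, hbound⟩ := hu.exists_pow_mul_setIntegral_le hopen hconn
    (hbdd.isCompact_closure.totallyBounded.subset subset_closure) hbdd.measure_lt_top.ne hr hδ
  exact ⟨k, Nat.cast_pos.2 hk, A, hA, by simpa only [Real.rpow_natCast] using hbound⟩
end
end

section
/- Let Ω ⊂ ℝⁿ be a nonempty bounded domain, let w, z ∈ C(Ω̄) with w(x) > 0 and z(x) < 0 for all x ∈ Ω̄, and let b, c, b₁, c₁ ∈ C(Ω̄) be positive functions satisfying (max_{Ω̄} b)·(max_{Ω̄} c) ≤ (min_{Ω̄} b₁)·(min_{Ω̄} c₁). If ∫_Ω (b₁ w + c z) w² dx ≤ 0 and ∫_Ω (b w + c₁ z) z² dx ≥ 0, then b, c, b₁, c₁ are constant functions on Ω̄, their values satisfy b·c = b₁·c₁, and b₁·w(x) + c·z(x) = 0 for every x ∈ Ω̄. -/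
open MeasureTheory Topology Filter

noncomputable section

/-!
Replace the coefficients by their extreme values: with `B = max b`, `C = max c`, `B₁ = min b₁`,
`C₁ = min c₁` and `φ = B₁ w + C z`, the signs of `w` and `z` give `∫ φ w² ≤ 0`, and
`B C ≤ B₁ C₁` gives `C (b w + c₁ z) ≤ C₁ φ`, hence `∫ φ z² ≥ 0`. Then
`∫ φ² (B₁ w - C z) = B₁² ∫ φ w² - C² ∫ φ z² ≤ 0` with a nonnegative continuous integrand, so
`φ = 0`. Now `b₁ w + c z ≥ φ = 0` and `b w + c₁ z ≤ 0`, so the two integral hypotheses force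
`b₁ w + c z = 0 = b w + c₁ z`, and every pointwise inequality used on the way is an equality.
-/

namespace CompetitionRigidity

open Set

section Algebra

variable {a a' c c' w z : ℝ}

theorem mul_add_mul_le_of_pos_of_neg (hw : 0 < w) (hz : z < 0) (ha : a ≤ a') (hc : c' ≤ c) :
    a * w + c * z ≤ a' * w + c' * z := by
  nlinarith

theorem eq_and_eq_of_mul_add_mul_eq (hw : 0 < w) (hz : z < 0) (ha : a ≤ a') (hc : c' ≤ c)
    (h : a * w + c * z = a' * w + c' * z) : a = a' ∧ c = c' := by
  constructor <;> nlinarith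

variable {B C B₁ C₁ : ℝ}

theorem mul_mul_add_mul_le_of_mul_le_mul (hw : 0 ≤ w) (hBC : B * C ≤ B₁ * C₁) :
    C * (B * w + C₁ * z) ≤ C₁ * (B₁ * w + C * z) := by
  nlinarith

theorem mul_eq_mul_of_mul_mul_add_mul_eq (hw : 0 < w)
    (h : C * (B * w + C₁ * z) = C₁ * (B₁ * w + C * z)) : B * C = B₁ * C₁ := by
  have : (B * C - B₁ * C₁) * w = 0 := by linear_combination h
  linarith [(mul_eq_zero.1 this).resolve_right hw.ne']

end Algebra

theorem _root_.IsCompact.sInf_image_pos {X : Type*} [TopologicalSpace X] {K : Set X} {f : X → ℝ}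
    (hK : IsCompact K) (hne : K.Nonempty) (hf : ContinuousOn f K) (hpos : ∀ x ∈ K, 0 < f x) :
    0 < sInf (f '' K) := by
  obtain ⟨y, hy, hyf⟩ := (hK.image_of_continuousOn hf).sInf_mem (hne.image f)
  exact hyf ▸ hpos y hy

section Integral

variable {E : Type*} [TopologicalSpace E] [T2Space E] [MeasurableSpace E] [OpensMeasurableSpace E]
  {μ : Measure E} [IsFiniteMeasureOnCompacts μ] {U : Set E}

theorem _root_.ContinuousOn.integrableOn_of_isCompact_closure_s11 {f : E → ℝ}
    (hK : IsCompact (closure U)) (hf : ContinuousOn f (closure U)) : IntegrableOn f U μ :=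
  (hf.integrableOn_compact hK).mono_set subset_closure

variable [μ.IsOpenPosMeasure]

theorem eqOn_zero_of_setIntegral_nonpos (hU : IsOpen U) (hK : IsCompact (closure U))
    {f : E → ℝ} (hf : ContinuousOn f (closure U)) (hf0 : ∀ x ∈ U, 0 ≤ f x)
    (hint : ∫ x in U, f x ∂μ ≤ 0) : EqOn f 0 (closure U) := by
  have hnn : 0 ≤ᵐ[μ.restrict U] f :=
    (ae_restrict_iff' hU.measurableSet).2 (.of_forall hf0)
  have hzero : ∫ x in U, f x ∂μ = 0 := le_antisymm hint (setIntegral_nonneg hU.measurableSet hf0)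
  have hae : f =ᵐ[μ.restrict U] 0 :=
    (setIntegral_eq_zero_iff_of_nonneg_ae hnn (hf.integrableOn_of_isCompact_closure_s11 hK)).1 hzero
  exact (Measure.eqOn_open_of_ae_eq hae hU (hf.mono subset_closure) continuousOn_const)
    |>.of_subset_closure hf continuousOn_const subset_closure subset_rfl

theorem eqOn_zero_of_setIntegral_mul_sq_nonpos (hU : IsOpen U) (hK : IsCompact (closure U))
    {f g : E → ℝ} (hf : ContinuousOn f (closure U)) (hg : ContinuousOn g (closure U))
    (hf0 : ∀ x ∈ U, 0 ≤ f x) (hg0 : ∀ x ∈ closure U, g x ≠ 0)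
    (hint : ∫ x in U, f x * g x ^ 2 ∂μ ≤ 0) : EqOn f 0 (closure U) := fun x hx => by
  have := eqOn_zero_of_setIntegral_nonpos hU hK (hf.mul (hg.pow 2))
    (fun y hy => mul_nonneg (hf0 y hy) (sq_nonneg _)) hint hx
  simpa [hg0 x hx] using this

theorem eqOn_zero_of_setIntegral_mul_sq_nonpos_of_nonneg (hU : IsOpen U) (hK : IsCompact (closure U))
    {w z : E → ℝ} {α β : ℝ} (hα : 0 ≤ α) (hβ : 0 < β)
    (hw : ContinuousOn w (closure U)) (hz : ContinuousOn z (closure U))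
    (hwpos : ∀ x ∈ closure U, 0 < w x) (hzneg : ∀ x ∈ closure U, z x < 0)
    (hφw : ∫ x in U, (α * w x + β * z x) * w x ^ 2 ∂μ ≤ 0)
    (hφz : 0 ≤ ∫ x in U, (α * w x + β * z x) * z x ^ 2 ∂μ) :
    EqOn (fun x => α * w x + β * z x) 0 (closure U) := by
  set φ := fun x => α * w x + β * z x with hφ
  have hφc : ContinuousOn φ (closure U) :=
    (continuousOn_const.mul hw).add (continuousOn_const.mul hz)
  have hpos : ∀ x ∈ closure U, 0 < α * w x - β * z x := fun x hx => by
    nlinarith [mul_nonneg hα (hwpos x hx).le, mul_pos hβ (neg_pos.2 (hzneg x hx))]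
  have hint : ∫ x in U, (α * w x - β * z x) * φ x ^ 2 ∂μ =
      α ^ 2 * ∫ x in U, φ x * w x ^ 2 ∂μ - β ^ 2 * ∫ x in U, φ x * z x ^ 2 ∂μ := by
    rw [← integral_const_mul, ← integral_const_mul, ← integral_sub]
    · exact setIntegral_congr_fun hU.measurableSet fun x _ => by simp only [hφ]; ring
    all_goals exact ((hφc.mul (by fun_prop)).integrableOn_of_isCompact_closure_s11 hK).const_mul _
  have hzero := eqOn_zero_of_setIntegral_nonpos (μ := μ) hU hK
    (((continuousOn_const.mul hw).sub (continuousOn_const.mul hz)).mul (hφc.pow 2))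
    (fun x hx => mul_nonneg (hpos x (subset_closure hx)).le (sq_nonneg _))
    (hint ▸ by nlinarith [sq_nonneg α, sq_nonneg β])
  intro x hx
  simpa [(hpos x hx).ne'] using hzero hx

variable {w z b c b₁ c₁ : E → ℝ} {B C B₁ C₁ : ℝ}

theorem eqOn_zero_of_setIntegral_bounds (hU : IsOpen U) (hK : IsCompact (closure U))
    (hC : 0 < C) (hC₁ : 0 < C₁) (hB₁ : 0 ≤ B₁) (hBC : B * C ≤ B₁ * C₁)
    (hw : ContinuousOn w (closure U)) (hz : ContinuousOn z (closure U))
    (hb : ContinuousOn b (closure U)) (hc : ContinuousOn c (closure U))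
    (hb₁ : ContinuousOn b₁ (closure U)) (hc₁ : ContinuousOn c₁ (closure U))
    (hwpos : ∀ x ∈ closure U, 0 < w x) (hzneg : ∀ x ∈ closure U, z x < 0)
    (hbB : ∀ x ∈ closure U, b x ≤ B) (hcC : ∀ x ∈ closure U, c x ≤ C)
    (hb₁B₁ : ∀ x ∈ closure U, B₁ ≤ b₁ x) (hc₁C₁ : ∀ x ∈ closure U, C₁ ≤ c₁ x)
    (h1 : ∫ x in U, (b₁ x * w x + c x * z x) * w x ^ 2 ∂μ ≤ 0)
    (h2 : 0 ≤ ∫ x in U, (b x * w x + c₁ x * z x) * z x ^ 2 ∂μ) :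
    EqOn (fun x => B₁ * w x + C * z x) 0 (closure U) := by
  have hint : ∀ f : E → ℝ, ContinuousOn f (closure U) → IntegrableOn f U μ :=
    fun f hf => hf.integrableOn_of_isCompact_closure_s11 hK
  refine eqOn_zero_of_setIntegral_mul_sq_nonpos_of_nonneg (μ := μ) hU hK hB₁ hC hw hz hwpos hzneg ?_ ?_
  · refine (setIntegral_mono_on (hint _ (by fun_prop)) (hint _ (by fun_prop)) hU.measurableSet
      fun x hx => ?_).trans h1
    have hx := subset_closure hx
    exact mul_le_mul_of_nonneg_right (mul_add_mul_le_of_pos_of_neg (hwpos x hx) (hzneg x hx)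
      (hb₁B₁ x hx) (hcC x hx)) (sq_nonneg _)
  · have hmono : C * ∫ x in U, (b x * w x + c₁ x * z x) * z x ^ 2 ∂μ ≤
        C₁ * ∫ x in U, (B₁ * w x + C * z x) * z x ^ 2 ∂μ := by
      rw [← integral_const_mul, ← integral_const_mul]
      refine setIntegral_mono_on (hint _ (by fun_prop)) (hint _ (by fun_prop)) hU.measurableSet
        fun x hx => ?_
      have hx := subset_closure hx
      rw [← mul_assoc, ← mul_assoc]
      refine mul_le_mul_of_nonneg_right ((mul_le_mul_of_nonneg_left ?_ hC.le).trans
        (mul_mul_add_mul_le_of_mul_le_mul (hwpos x hx).le hBC)) (sq_nonneg _)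
      exact mul_add_mul_le_of_pos_of_neg (hwpos x hx) (hzneg x hx) (hbB x hx) (hc₁C₁ x hx)
    exact (mul_nonneg_iff_of_pos_left hC₁).1 ((mul_nonneg hC.le h2).trans hmono)

theorem eqOn_const_of_setIntegral_bounds (hU : IsOpen U) (hK : IsCompact (closure U))
    (hC : 0 < C) (hC₁ : 0 < C₁) (hB₁ : 0 ≤ B₁) (hBC : B * C ≤ B₁ * C₁)
    (hw : ContinuousOn w (closure U)) (hz : ContinuousOn z (closure U))
    (hb : ContinuousOn b (closure U)) (hc : ContinuousOn c (closure U))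
    (hb₁ : ContinuousOn b₁ (closure U)) (hc₁ : ContinuousOn c₁ (closure U))
    (hwpos : ∀ x ∈ closure U, 0 < w x) (hzneg : ∀ x ∈ closure U, z x < 0)
    (hbB : ∀ x ∈ closure U, b x ≤ B) (hcC : ∀ x ∈ closure U, c x ≤ C)
    (hb₁B₁ : ∀ x ∈ closure U, B₁ ≤ b₁ x) (hc₁C₁ : ∀ x ∈ closure U, C₁ ≤ c₁ x)
    (h1 : ∫ x in U, (b₁ x * w x + c x * z x) * w x ^ 2 ∂μ ≤ 0)
    (h2 : 0 ≤ ∫ x in U, (b x * w x + c₁ x * z x) * z x ^ 2 ∂μ) :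
    ∀ x ∈ closure U, b x = B ∧ c x = C ∧ b₁ x = B₁ ∧ c₁ x = C₁ ∧ B * C = B₁ * C₁ ∧
      B₁ * w x + C * z x = 0 := by
  have hφ := eqOn_zero_of_setIntegral_bounds hU hK hC hC₁ hB₁ hBC hw hz hb hc hb₁ hc₁ hwpos hzneg
    hbB hcC hb₁B₁ hc₁C₁ h1 h2
  have hchain : ∀ x ∈ closure U, C * (b x * w x + c₁ x * z x) ≤ C * (B * w x + C₁ * z x) ∧
      C * (B * w x + C₁ * z x) ≤ 0 := fun x hx =>
    ⟨mul_le_mul_of_nonneg_left (mul_add_mul_le_of_pos_of_neg (hwpos x hx) (hzneg x hx)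
      (hbB x hx) (hc₁C₁ x hx)) hC.le,
     (mul_mul_add_mul_le_of_mul_le_mul (hwpos x hx).le hBC).trans (by simp [hφ hx])⟩
  have hb₁c_nonneg : ∀ x ∈ closure U, 0 ≤ b₁ x * w x + c x * z x := fun x hx =>
    (hφ hx).symm.le.trans
      (mul_add_mul_le_of_pos_of_neg (hwpos x hx) (hzneg x hx) (hb₁B₁ x hx) (hcC x hx))
  have hb₁c_zero : EqOn (fun x => b₁ x * w x + c x * z x) 0 (closure U) :=
    eqOn_zero_of_setIntegral_mul_sq_nonpos hU hK (by fun_prop) hw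
      (fun x hx => hb₁c_nonneg x (subset_closure hx)) (fun x hx => (hwpos x hx).ne') h1
  have hbc₁_zero : EqOn (fun x => -(b x * w x + c₁ x * z x)) 0 (closure U) :=
    eqOn_zero_of_setIntegral_mul_sq_nonpos hU hK (by fun_prop) hz
      (fun x hx => by
        have := hchain x (subset_closure hx)
        nlinarith)
      (fun x hx => (hzneg x hx).ne) (by simpa only [neg_mul, integral_neg, neg_nonpos] using h2)
  intro x hx
  have hφx : B₁ * w x + C * z x = 0 := hφ hx
  have hbc₁x : b x * w x + c₁ x * z x = 0 := neg_eq_zero.1 (hbc₁_zero hx)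
  have hBx : B * w x + C₁ * z x = 0 := by
    have := hchain x hx
    rw [hbc₁x, mul_zero] at this
    exact (mul_eq_zero.1 (le_antisymm this.2 this.1)).resolve_left hC.ne'
  obtain ⟨hb₁x, hcx⟩ := eq_and_eq_of_mul_add_mul_eq (hwpos x hx) (hzneg x hx) (hb₁B₁ x hx)
    (hcC x hx) (hφx.trans (hb₁c_zero hx).symm)
  obtain ⟨hbx, hc₁x⟩ := eq_and_eq_of_mul_add_mul_eq (hwpos x hx) (hzneg x hx) (hbB x hx)
    (hc₁C₁ x hx) (hbc₁x.trans hBx.symm)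
  have hBC_eq : B * C = B₁ * C₁ :=
    mul_eq_mul_of_mul_mul_add_mul_eq (z := z x) (hwpos x hx) (by rw [hBx, hφx, mul_zero, mul_zero])
  exact ⟨hbx, hcx.symm, hb₁x.symm, hc₁x, hBC_eq, hφx⟩

end Integral

end CompetitionRigidity

open CompetitionRigidity Set in
theorem stmt_11_general {n : ℕ} (Ω : Set (Pt n)) (hΩ : IsBoundedDomain Ω)
    (w z b c b₁ c₁ : Pt n → ℝ)
    (hw : ContinuousOn w (closure Ω)) (hz : ContinuousOn z (closure Ω))
    (hwpos : ∀ x ∈ closure Ω, 0 < w x) (hzneg : ∀ x ∈ closure Ω, z x < 0)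
    (hb : ContinuousOn b (closure Ω)) (hc : ContinuousOn c (closure Ω))
    (hb₁ : ContinuousOn b₁ (closure Ω)) (hc₁ : ContinuousOn c₁ (closure Ω))
    (hcpos : ∀ x ∈ closure Ω, 0 < c x)
    (hb₁pos : ∀ x ∈ closure Ω, 0 < b₁ x) (hc₁pos : ∀ x ∈ closure Ω, 0 < c₁ x)
    (hcond : sSup (b '' closure Ω) * sSup (c '' closure Ω) ≤
             sInf (b₁ '' closure Ω) * sInf (c₁ '' closure Ω))
    (h1 : (∫ x in Ω, (b₁ x * w x + c x * z x) * w x ^ 2) ≤ 0)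
    (h2 : 0 ≤ (∫ x in Ω, (b x * w x + c₁ x * z x) * z x ^ 2)) :
    (∀ x ∈ closure Ω, ∀ y ∈ closure Ω, b x = b y ∧ c x = c y ∧ b₁ x = b₁ y ∧ c₁ x = c₁ y) ∧
    (∀ x ∈ closure Ω, b x * c x = b₁ x * c₁ x) ∧
    (∀ x ∈ closure Ω, b₁ x * w x + c x * z x = 0) := by
  obtain ⟨hopen, hconn, hbdd⟩ := hΩ
  have hK : IsCompact (closure Ω) := hbdd.isCompact_closure
  have hne : (closure Ω).Nonempty := hconn.nonempty.closure
  have key := eqOn_const_of_setIntegral_bounds hopen hK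
    ((hcpos _ hne.some_mem).trans_le
      (le_csSup (hK.bddAbove_image hc) (mem_image_of_mem c hne.some_mem)))
    (hK.sInf_image_pos hne hc₁ hc₁pos) (hK.sInf_image_pos hne hb₁ hb₁pos).le hcond
    hw hz hb hc hb₁ hc₁ hwpos hzneg
    (fun x hx => le_csSup (hK.bddAbove_image hb) (mem_image_of_mem b hx))
    (fun x hx => le_csSup (hK.bddAbove_image hc) (mem_image_of_mem c hx))
    (fun x hx => csInf_le (hK.bddBelow_image hb₁) (mem_image_of_mem b₁ hx))
    (fun x hx => csInf_le (hK.bddBelow_image hc₁) (mem_image_of_mem c₁ hx)) h1 h2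
  refine ⟨fun x hx y hy => ?_, fun x hx => ?_, fun x hx => ?_⟩
  · obtain ⟨hbx, hcx, hb₁x, hc₁x, -⟩ := key x hx
    obtain ⟨hby, hcy, hb₁y, hc₁y, -⟩ := key y hy
    exact ⟨hbx.trans hby.symm, hcx.trans hcy.symm, hb₁x.trans hb₁y.symm, hc₁x.trans hc₁y.symm⟩
  · obtain ⟨hbx, hcx, hb₁x, hc₁x, hBC, -⟩ := key x hx
    rw [hbx, hcx, hb₁x, hc₁x, hBC]
  · obtain ⟨-, hcx, hb₁x, -, -, hφ⟩ := key x hx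
    rw [hb₁x, hcx, hφ]

theorem stmt_11 {n : ℕ} (Ω : Set (Pt n)) (hΩ : IsBoundedDomain Ω)
    (w z b c b₁ c₁ : Pt n → ℝ)
    (hw : ContinuousOn w (closure Ω)) (hz : ContinuousOn z (closure Ω))
    (hwpos : ∀ x ∈ closure Ω, 0 < w x) (hzneg : ∀ x ∈ closure Ω, z x < 0)
    (hb : ContinuousOn b (closure Ω)) (hc : ContinuousOn c (closure Ω))
    (hb₁ : ContinuousOn b₁ (closure Ω)) (hc₁ : ContinuousOn c₁ (closure Ω))
    (hbpos : ∀ x ∈ closure Ω, 0 < b x) (hcpos : ∀ x ∈ closure Ω, 0 < c x)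
    (hb₁pos : ∀ x ∈ closure Ω, 0 < b₁ x) (hc₁pos : ∀ x ∈ closure Ω, 0 < c₁ x)
    (hcond : sSup (b '' closure Ω) * sSup (c '' closure Ω) ≤
             sInf (b₁ '' closure Ω) * sInf (c₁ '' closure Ω))
    (h1 : (∫ x in Ω, (b₁ x * w x + c x * z x) * w x ^ 2) ≤ 0)
    (h2 : 0 ≤ (∫ x in Ω, (b x * w x + c₁ x * z x) * z x ^ 2)) :
    (∀ x ∈ closure Ω, ∀ y ∈ closure Ω, b x = b y ∧ c x = c y ∧ b₁ x = b₁ y ∧ c₁ x = c₁ y) ∧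
    (∀ x ∈ closure Ω, b x * c x = b₁ x * c₁ x) ∧
    (∀ x ∈ closure Ω, b₁ x * w x + c x * z x = 0) :=
  stmt_11_general Ω hΩ w z b c b₁ c₁ hw hz hwpos hzneg hb hc hb₁ hc₁ hcpos hb₁pos hc₁pos hcond h1 h2
end
end
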